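/- arXiv:1309.1151 — 4 statements merged into one kernel-verified Lean document; each statement's English description precedes it below -/
import Mathlib

section
/- Let NMExt: {0,1}^{2n} → {0,1}^k be a function such that (i) for a uniform 2n-bit X, NMExt(X) is ε-close to uniform on {0,1}^k, and (ii) for every split-state tampering function f(y1,y2) = (f1(y1), f2(y2)) with f1, f2: {0,1}^n → {0,1}^n, NMExt is a non-malleable function with error ε with respect to the uniform distribution on {0,1}^{2n} and f. Define Dec(x) := NMExt(x) and Enc(s) := a uniformly random element of NMExt^{-1}(s). Then (Enc, Dec) is a non-malleable coding scheme with message length k, block length 2n, and error ε·(2^k + 1) against the family of split-state adversaries. -/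
open scoped Classical
open Finset

/-- Statistical distance (half the ℓ1 distance) between two functions viewed as
(sub)distributions on a finite type. -/
noncomputable def sd {α : Type*} [Fintype α] (p q : α → ℝ) : ℝ :=
  (1 / 2) * ∑ a, |p a - q a|

private lemma abs_sum_pair {σ : Type*} [Fintype σ] (g h : σ → ℝ)
    (hg : ∀ m, 0 ≤ g m) (hh : ∀ m, 0 ≤ h m) :
    ∑ m, |g m - h m| ≤ ∑ m, g m + ∑ m, h m := by
  rw [← Finset.sum_add_distrib]
  refine Finset.sum_le_sum fun m _ => ?_
  calc |g m - h m| ≤ |g m| + |h m| := abs_sub _ _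
  _ = g m + h m := by rw [abs_of_nonneg (hg m), abs_of_nonneg (hh m)]

set_option maxHeartbeats 1600000 in
/-- Core combinatorial lemma: from an (ε-close-to-uniform) distribution `p` on
messages, conditional distributions `C s`, and a non-malleability witness `Dd`,
construct a simulator `(Dn, Ds)` good for every message simultaneously, with
error `ε * (card + 1)`. -/
private lemma nm_core {σ : Type*} [Fintype σ] [DecidableEq σ] [Nonempty σ]
    (ε : ℝ) (p : σ → ℝ) (C : σ → σ → ℝ) (Dd : Option σ → ℝ)
    (hp : ∀ s, 0 < p s)
    (hC0 : ∀ s m, 0 ≤ C s m) (hC1 : ∀ s, ∑ m, C s m = 1)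
    (hDd0 : ∀ v, 0 ≤ Dd v) (hDd1 : ∑ v, Dd v = 1)
    (hpsum : ∑ s, p s = 1)
    (hextK : 1/2 * ∑ s, |p s - 1/(Fintype.card σ : ℝ)| ≤ ε)
    (hnmK : ∑ s, p s * (1/2 * ∑ m, |C s m - (Dd (some m) + if m = s then Dd none else 0)|) ≤ ε) :
    ∃ (Dn : ℝ) (Ds : σ → ℝ), 0 ≤ Dn ∧ (∀ m, 0 ≤ Ds m) ∧ Dn + ∑ m, Ds m = 1 ∧
      ∀ s, 1/2 * ∑ m, |C s m - (Ds m + if m = s then Dn else 0)| ≤ ε * ((Fintype.card σ : ℝ) + 1) := by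
  set K : ℝ := (Fintype.card σ : ℝ) with hKdef
  clear_value K
  have hK1 : (1:ℝ) ≤ K := by
    have h : 0 < Fintype.card σ := Fintype.card_pos
    rw [hKdef]; exact_mod_cast h
  have hKpos : (0:ℝ) < K := by linarith
  set B : ℝ := ε * (K + 1) with hBdef
  clear_value B
  set T : σ → σ → ℝ := fun s m => Dd (some m) + if m = s then Dd none else 0 with hTdef
  set r : σ → ℝ := fun s => 1/2 * ∑ m, |C s m - T s m| with hrdef
  clear_value T r
  have hε0 : 0 ≤ ε := le_trans (by positivity) hextK
  have hDd1' : Dd none + ∑ m, Dd (some m) = 1 := by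
    rw [Fintype.sum_option] at hDd1; exact hDd1
  have hT0 : ∀ s m, 0 ≤ T s m := by
    intro s m
    simp only [hTdef]
    have h : (0:ℝ) ≤ if m = s then Dd none else 0 := by
      split
      · exact hDd0 none
      · exact le_refl 0
    exact add_nonneg (hDd0 _) h
  have hTsum : ∀ s, ∑ m, T s m = 1 := by
    intro s
    simp only [hTdef]
    rw [Finset.sum_add_distrib, Finset.sum_ite_eq' univ s (fun _ => Dd none)]
    simp only [mem_univ, if_true]
    linarith [hDd1']
  have hr0 : ∀ s, 0 ≤ r s := by
    intro s; rw [hrdef]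
    have : (0:ℝ) ≤ ∑ m, |C s m - T s m| := Finset.sum_nonneg fun m _ => abs_nonneg _
    linarith
  have hr1 : ∀ s, r s ≤ 1 := by
    intro s; rw [hrdef]
    have h := abs_sum_pair (C s) (T s) (hC0 s) (hT0 s)
    rw [hC1 s, hTsum s] at h
    linarith
  have hnm' : ∑ s, p s * r s ≤ ε := by
    simpa only [hrdef, hTdef] using hnmK
  have hqsum : ∑ s, (p s - 1/K) = 0 := by
    rw [Finset.sum_sub_distrib, hpsum, Finset.sum_const, Finset.card_univ, nsmul_eq_mul,
      ← hKdef, mul_one_div, div_self hKpos.ne']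
    ring
  have hd : ∑ s, max 0 (1/K - p s) ≤ ε := by
    have h1 : ∀ s : σ, max 0 (1/K - p s) = (|p s - 1/K| - (p s - 1/K))/2 := by
      intro s
      rcases le_total (p s) (1/K) with h | h
      · rw [abs_of_nonpos (by linarith), max_eq_right (by linarith)]; ring
      · rw [abs_of_nonneg (by linarith), max_eq_left (by linarith)]; ring
    calc ∑ s, max 0 (1/K - p s) = ∑ s, (|p s - 1/K| - (p s - 1/K))/2 :=
          Finset.sum_congr rfl fun s _ => h1 s
    _ = ((∑ s, |p s - 1/K|) - ∑ s, (p s - 1/K))/2 := by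
          rw [← Finset.sum_div, Finset.sum_sub_distrib]
    _ = (∑ s, |p s - 1/K|)/2 := by rw [hqsum]; ring
    _ ≤ ε := by linarith [hextK]
  by_cases hB1 : 1 ≤ B
  · -- trivial simulator: always output "same"
    refine ⟨1, fun _ => 0, one_pos.le, fun _ => le_refl 0, by simp, ?_⟩
    intro s
    have h := abs_sum_pair (C s) (fun m => if m = s then (1:ℝ) else 0) (hC0 s)
      (fun m => by split <;> norm_num)
    rw [hC1 s, Finset.sum_ite_eq' univ s (fun _ => (1:ℝ))] at h
    simp only [mem_univ, if_true] at h
    dsimp only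
    simp only [zero_add]
    linarith
  by_cases hall : ∀ s, r s ≤ B
  · -- the witness Dd itself works
    refine ⟨Dd none, fun m => Dd (some m), hDd0 none, fun m => hDd0 _, hDd1', ?_⟩
    intro s
    have h := hall s
    rw [hrdef] at h
    simpa only [hTdef] using h
  -- main case
  push_neg at hall
  obtain ⟨s₀, hs₀⟩ := hall
  have hB1' : B < 1 := not_le.mp hB1
  obtain ⟨sm, _, hsm⟩ := Finset.exists_max_image univ r univ_nonempty
  set R : ℝ := r sm with hRdef
  clear_value R
  have hrR : ∀ t, r t ≤ R := fun t => hsm t (mem_univ t)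
  have hBR : B < R := lt_of_lt_of_le hs₀ (hrR s₀)
  have hpRε : p sm * R ≤ ε := by
    have h2 : p sm * r sm ≤ ∑ t, p t * r t :=
      Finset.single_le_sum (f := fun t => p t * r t)
        (fun i _ => mul_nonneg (hp i).le (hr0 i)) (mem_univ sm)
    rw [← hRdef] at h2
    linarith
  have hεpos : 0 < ε := by
    rcases lt_or_eq_of_le hε0 with h | h
    · exact h
    · exfalso
      rw [← h] at hpRε
      have h3 : B = 0 := by rw [hBdef, ← h]; ring
      nlinarith [hp sm, hpRε, hBR, h3]
  have hBpos : 0 < B := by rw [hBdef]; positivity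
  have hRpos : 0 < R := hBpos.trans hBR
  have hpsm_lb : 1/K - ε ≤ p sm := by
    have h1 : max 0 (1/K - p sm) ≤ ε :=
      le_trans (Finset.single_le_sum (f := fun t => max 0 (1/K - p t))
        (fun i _ => le_max_left 0 _) (mem_univ sm)) hd
    linarith [le_max_right 0 (1/K - p sm)]
  have hKR : R ≤ K * ε * (1 + R) := by
    have h1 : (1/K - ε) * R ≤ ε := le_trans (mul_le_mul_of_nonneg_right hpsm_lb hRpos.le) hpRε
    have h2 : 1/K * R ≤ ε + ε * R := by nlinarith
    calc R = K * (1/K * R) := by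
          rw [← mul_assoc, mul_one_div, div_self hKpos.ne', one_mul]
    _ ≤ K * (ε + ε * R) := mul_le_mul_of_nonneg_left h2 hKpos.le
    _ = K * ε * (1 + R) := by ring
  have hKεB : K * ε ≤ B := by rw [hBdef]; nlinarith
  have hRB1 : R * (1 - B) ≤ B := by nlinarith [hKR, hKεB, hRpos]
  set τ : ℝ := 1 - R * (1 - B) / B with hτdef
  clear_value τ
  have hτ0 : 0 ≤ τ := by
    rw [hτdef]
    have h := (div_le_one hBpos).mpr hRB1
    linarith
  have hRτ : R - τ = (R - B) / B := by
    rw [hτdef]; field_simp; ring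
  have hRBpos : 0 < R - B := by linarith
  have hτR : τ < R := by
    have h : 0 < (R - B)/B := div_pos hRBpos hBpos
    linarith [hRτ]
  have hBτ : B * τ = B - R + R * B := by
    rw [hτdef]; field_simp; ring
  -- key inequality (KEY2)
  have hK2 : K * ε * (1 + R) ≤ R + τ := by
    have hKε : K * ε = B - ε := by rw [hBdef]; ring
    have hmain : (B - ε) * B * (1 + R) ≤ 2*B*R + B - R := by
      rcases le_or_gt (2*B - 1 - (B - ε)*B) 0 with hsl | hsl
      · nlinarith [mul_nonneg (sub_nonneg.mpr hRB1) (neg_nonneg.mpr hsl), mul_pos hεpos hBpos,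
          hB1', hBpos, hεpos]
      · nlinarith [mul_pos (sub_pos.mpr hBR) hsl, hεpos, hBpos, hB1', sq_nonneg B,
          mul_pos hBpos hBpos]
    have h2 : K * ε * (1 + R) * B ≤ (R + τ) * B := by
      have h3 : (R + τ) * B = 2*B*R + B - R := by nlinarith [hBτ]
      rw [hKε, h3]; nlinarith [hmain]
    exact le_of_mul_le_mul_right h2 hBpos
  -- key inequality (GOAL)
  have hGOAL : ∑ t, max 0 (r t - τ) ≤ (R - B) / B := by
    have hsplit : ∑ t, max 0 (r t - τ) = ∑ t ∈ univ.filter (fun t => τ < r t), (r t - τ) := by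
      rw [Finset.sum_filter]
      refine Finset.sum_congr rfl fun t _ => ?_
      rcases le_or_gt (r t) τ with h | h
      · rw [if_neg (not_lt.mpr h), max_eq_left (by linarith)]
      · rw [if_pos h, max_eq_right (by linarith)]
    rw [hsplit, ← hRτ]
    set L := univ.filter (fun t => τ < r t) with hLdef
    rcases lt_or_ge L.card 2 with hcard | hcard
    · have h1 : ∑ t ∈ L, (r t - τ) ≤ L.card • (R - τ) :=
        Finset.sum_le_card_nsmul L _ _ (fun t _ => by linarith [hrR t])
      have h2 : (L.card : ℝ) ≤ 1 := by exact_mod_cast Nat.lt_succ_iff.mp hcard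
      have h3 : (L.card : ℝ) * (R - τ) ≤ 1 * (R - τ) :=
        mul_le_mul_of_nonneg_right h2 (by linarith)
      rw [nsmul_eq_mul] at h1
      linarith
    · have hstep : ∀ t ∈ L, 1/K * r t ≤ p t * r t + max 0 (1/K - p t) * R := by
        intro t _
        have h1 : 1/K ≤ p t + max 0 (1/K - p t) := by
          rcases le_total (1/K) (p t) with h | h
          · linarith [le_max_left (0:ℝ) (1/K - p t)]
          · rw [max_eq_right (by linarith)]; linarith
        nlinarith [hr0 t, hrR t, le_max_left (0:ℝ) (1/K - p t), hp t]
      have hsum1 : ∑ t ∈ L, 1/K * r t ≤ ε + ε * R := by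
        calc ∑ t ∈ L, 1/K * r t ≤ ∑ t ∈ L, (p t * r t + max 0 (1/K - p t) * R) :=
              Finset.sum_le_sum hstep
        _ = ∑ t ∈ L, p t * r t + (∑ t ∈ L, max 0 (1/K - p t)) * R := by
              rw [Finset.sum_add_distrib, Finset.sum_mul]
        _ ≤ ∑ t, p t * r t + (∑ t, max 0 (1/K - p t)) * R := by
              have ha : ∑ t ∈ L, p t * r t ≤ ∑ t, p t * r t :=
                Finset.sum_le_sum_of_subset_of_nonneg (Finset.subset_univ L)
                  (fun i _ _ => mul_nonneg (hp i).le (hr0 i))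
              have hb : ∑ t ∈ L, max 0 (1/K - p t) ≤ ∑ t, max 0 (1/K - p t) :=
                Finset.sum_le_sum_of_subset_of_nonneg (Finset.subset_univ L)
                  (fun i _ _ => le_max_left 0 _)
              have hc : (∑ t ∈ L, max 0 (1/K - p t)) * R ≤ (∑ t, max 0 (1/K - p t)) * R :=
                mul_le_mul_of_nonneg_right hb hRpos.le
              linarith
        _ ≤ ε + ε * R := by
              have hc : (∑ t, max 0 (1/K - p t)) * R ≤ ε * R :=
                mul_le_mul_of_nonneg_right hd hRpos.le
              linarith [hnm']
      have hsumrL : ∑ t ∈ L, r t ≤ K * (ε + ε * R) := by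
        have h1 : 1/K * ∑ t ∈ L, r t ≤ ε + ε*R := by
          rw [Finset.mul_sum]; exact hsum1
        have h2 : K * (1/K * ∑ t ∈ L, r t) ≤ K * (ε + ε*R) :=
          mul_le_mul_of_nonneg_left h1 hKpos.le
        calc ∑ t ∈ L, r t = K * (1/K * ∑ t ∈ L, r t) := by
              rw [← mul_assoc, mul_one_div, div_self hKpos.ne', one_mul]
        _ ≤ K * (ε + ε*R) := h2
      have hτcard : 2 * τ ≤ (L.card : ℝ) * τ := by
        have h : (2:ℝ) ≤ L.card := by exact_mod_cast hcard
        nlinarith [hτ0]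
      have heq : ∑ t ∈ L, (r t - τ) = ∑ t ∈ L, r t - (L.card : ℝ) * τ := by
        rw [Finset.sum_sub_distrib, Finset.sum_const, nsmul_eq_mul]
      rw [heq]
      have h5 : K * (ε + ε * R) = K * ε * (1 + R) := by ring
      linarith [hK2]
  -- the construction
  set θ : ℝ := 1 - B / R with hθdef
  clear_value θ
  have hBRle : B / R ≤ 1 := (div_le_one hRpos).mpr hBR.le
  have hBRdivpos : 0 < B / R := div_pos hBpos hRpos
  have hθ0 : 0 ≤ θ := by rw [hθdef]; linarith
  have hθ1 : θ ≤ 1 := by rw [hθdef]; linarith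
  set w : σ → ℝ := fun t => B * max 0 (r t - τ) / (R - B) with hwdef
  have hw0 : ∀ t, 0 ≤ w t := by
    intro t
    rw [hwdef]
    have h1 : (0:ℝ) ≤ max 0 (r t - τ) := le_max_left 0 _
    positivity
  clear_value w
  set W : ℝ := ∑ t, w t with hWdef
  clear_value W
  have hW0 : 0 ≤ W := by
    rw [hWdef]; exact Finset.sum_nonneg fun t _ => hw0 t
  have hW1 : W ≤ 1 := by
    rw [hWdef]
    have h1 : ∑ t, w t = B * (∑ t, max 0 (r t - τ)) / (R - B) := by
      rw [Finset.mul_sum, Finset.sum_div]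
      exact Finset.sum_congr rfl fun t _ => by rw [hwdef]
    rw [h1, div_le_one hRBpos]
    calc B * ∑ t, max 0 (r t - τ) ≤ B * ((R - B)/B) :=
          mul_le_mul_of_nonneg_left hGOAL hBpos.le
    _ = R - B := by field_simp
  refine ⟨(1 - θ) * Dd none,
    fun m => (1 - θ) * Dd (some m) + θ * ((∑ t, w t * C t m) + (1 - W) * C sm m),
    mul_nonneg (by linarith) (hDd0 none), ?_, ?_, ?_⟩
  · intro m
    dsimp only
    have h1 : 0 ≤ ∑ t, w t * C t m := Finset.sum_nonneg fun t _ => mul_nonneg (hw0 t) (hC0 t m)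
    have h2 : 0 ≤ (1 - W) * C sm m := mul_nonneg (by linarith) (hC0 sm m)
    have h3 : 0 ≤ (1 - θ) * Dd (some m) := mul_nonneg (by linarith) (hDd0 _)
    nlinarith [hθ0]
  · -- sums to one
    have h1 : ∑ m, ((1 - θ) * Dd (some m) + θ * ((∑ t, w t * C t m) + (1 - W) * C sm m))
        = (1 - θ) * ∑ m, Dd (some m)
          + θ * ((∑ m, ∑ t, w t * C t m) + (1 - W) * ∑ m, C sm m) := by
      rw [Finset.sum_add_distrib, ← Finset.mul_sum]
      congr 1
      rw [← Finset.mul_sum]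
      congr 1
      rw [Finset.sum_add_distrib, ← Finset.mul_sum]
    have h2 : ∑ m, ∑ t, w t * C t m = W := by
      rw [Finset.sum_comm, hWdef]
      exact Finset.sum_congr rfl fun t _ => by rw [← Finset.mul_sum, hC1 t, mul_one]
    rw [h1, h2, hC1 sm]
    linear_combination (1 - θ) * hDd1'
  · -- the per-message bound
    intro s
    have key : ∀ m, C s m - ((1 - θ) * Dd (some m) + θ * ((∑ t, w t * C t m) + (1 - W) * C sm m)
          + (if m = s then (1 - θ) * Dd none else 0))
        = (1 - θ) * (C s m - T s m)
          + θ * (C s m - ((∑ t, w t * C t m) + (1 - W) * C sm m)) := by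
      intro m
      simp only [hTdef]
      split <;> ring
    have hdec : ∀ m, C s m - ((∑ t, w t * C t m) + (1 - W) * C sm m)
        = (∑ t, w t * (C s m - C t m)) + (1 - W) * (C s m - C sm m) := by
      intro m
      have h1 : ∑ t, w t * (C s m - C t m) = W * C s m - ∑ t, w t * C t m := by
        rw [hWdef, Finset.sum_mul]
        rw [← Finset.sum_sub_distrib]
        exact Finset.sum_congr rfl fun t _ => by ring
      rw [h1]; ring
    have habs1 : ∀ m, |C s m - ((1 - θ) * Dd (some m)
          + θ * ((∑ t, w t * C t m) + (1 - W) * C sm m) + (if m = s then (1 - θ) * Dd none else 0))|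
        ≤ (1 - θ) * |C s m - T s m|
          + θ * ((∑ t, w t * |C s m - C t m|) + (1 - W) * |C s m - C sm m|) := by
      intro m
      rw [key m]
      calc |(1 - θ) * (C s m - T s m) + θ * (C s m - ((∑ t, w t * C t m) + (1 - W) * C sm m))|
          ≤ |(1 - θ) * (C s m - T s m)| + |θ * (C s m - ((∑ t, w t * C t m) + (1 - W) * C sm m))| :=
            abs_add_le _ _
      _ = (1 - θ) * |C s m - T s m| + θ * |C s m - ((∑ t, w t * C t m) + (1 - W) * C sm m)| := by
            rw [abs_mul, abs_mul, abs_of_nonneg (by linarith : (0:ℝ) ≤ 1 - θ), abs_of_nonneg hθ0]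
      _ ≤ (1 - θ) * |C s m - T s m|
            + θ * ((∑ t, w t * |C s m - C t m|) + (1 - W) * |C s m - C sm m|) := by
            have h1 : |C s m - ((∑ t, w t * C t m) + (1 - W) * C sm m)|
                ≤ (∑ t, w t * |C s m - C t m|) + (1 - W) * |C s m - C sm m| := by
              rw [hdec m]
              calc |(∑ t, w t * (C s m - C t m)) + (1 - W) * (C s m - C sm m)|
                  ≤ |∑ t, w t * (C s m - C t m)| + |(1 - W) * (C s m - C sm m)| := abs_add_le _ _
              _ ≤ (∑ t, |w t * (C s m - C t m)|) + |(1 - W) * (C s m - C sm m)| := by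
                    linarith [Finset.abs_sum_le_sum_abs (fun t => w t * (C s m - C t m)) univ]
              _ = (∑ t, w t * |C s m - C t m|) + (1 - W) * |C s m - C sm m| := by
                    rw [abs_mul, abs_of_nonneg (by linarith : (0:ℝ) ≤ 1 - W)]
                    congr 1
                    exact Finset.sum_congr rfl fun t _ => by
                      rw [abs_mul, abs_of_nonneg (hw0 t)]
            nlinarith [hθ0]
      -- end habs1
    have hAt : ∀ t, ∑ m, |C s m - C t m| ≤ 2 := by
      intro t
      have h := abs_sum_pair (C s) (C t) (hC0 s) (hC0 t)
      rw [hC1 s, hC1 t] at h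
      linarith
    have hsumw : ∑ t, w t * (∑ m, |C s m - C t m|) ≤ 2 * (W - w s) := by
      rw [← Finset.add_sum_erase univ _ (mem_univ s)]
      have hzero : ∑ m, |C s m - C s m| = 0 := by simp
      rw [hzero, mul_zero, zero_add]
      calc ∑ t ∈ univ.erase s, w t * (∑ m, |C s m - C t m|)
          ≤ ∑ t ∈ univ.erase s, w t * 2 :=
            Finset.sum_le_sum fun t _ => mul_le_mul_of_nonneg_left (hAt t) (hw0 t)
      _ = 2 * ∑ t ∈ univ.erase s, w t := by rw [← Finset.sum_mul]; ring
      _ = 2 * (W - w s) := by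
            rw [hWdef, ← Finset.add_sum_erase univ w (mem_univ s)]; ring
    have h2r : ∑ m, |C s m - T s m| = 2 * r s := by rw [hrdef]; ring
    have hsumtot : ∑ m, |C s m - ((1 - θ) * Dd (some m)
          + θ * ((∑ t, w t * C t m) + (1 - W) * C sm m) + (if m = s then (1 - θ) * Dd none else 0))|
        ≤ 2 * ((1 - θ) * r s + θ * (1 - w s)) := by
      calc ∑ m, |C s m - ((1 - θ) * Dd (some m)
              + θ * ((∑ t, w t * C t m) + (1 - W) * C sm m) + (if m = s then (1 - θ) * Dd none else 0))|
          ≤ ∑ m, ((1 - θ) * |C s m - T s m|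
              + θ * ((∑ t, w t * |C s m - C t m|) + (1 - W) * |C s m - C sm m|)) :=
            Finset.sum_le_sum fun m _ => habs1 m
      _ = (1 - θ) * (∑ m, |C s m - T s m|)
            + θ * ((∑ m, ∑ t, w t * |C s m - C t m|) + (1 - W) * ∑ m, |C s m - C sm m|) := by
            rw [Finset.sum_add_distrib, ← Finset.mul_sum]
            congr 1
            rw [← Finset.mul_sum]
            congr 1
            rw [Finset.sum_add_distrib, ← Finset.mul_sum]
      _ = (1 - θ) * (2 * r s)
            + θ * ((∑ t, w t * (∑ m, |C s m - C t m|)) + (1 - W) * ∑ m, |C s m - C sm m|) := by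
            rw [h2r, Finset.sum_comm]
            congr 3
            exact Finset.sum_congr rfl fun t _ => by rw [Finset.mul_sum]
      _ ≤ (1 - θ) * (2 * r s) + θ * (2 * (W - w s) + (1 - W) * 2) := by
            have h1 : (1 - W) * ∑ m, |C s m - C sm m| ≤ (1 - W) * 2 :=
              mul_le_mul_of_nonneg_left (hAt sm) (by linarith)
            have h2 : (∑ t, w t * (∑ m, |C s m - C t m|)) + (1 - W) * ∑ m, |C s m - C sm m|
                ≤ 2 * (W - w s) + (1 - W) * 2 := by linarith [hsumw]
            nlinarith [hθ0]
      _ = 2 * ((1 - θ) * r s + θ * (1 - w s)) := by ring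
    have hfinal : (1 - θ) * r s + θ * (1 - w s) ≤ B := by
      have hmin : r s - max 0 (r s - τ) ≤ τ := by
        rcases le_total (r s) τ with h | h
        · rw [max_eq_left (by linarith)]; linarith
        · rw [max_eq_right (by linarith)]; linarith
      have heq : (1 - θ) * r s + θ * (1 - w s)
          = (B * r s + (R - B) - B * max 0 (r s - τ)) / R := by
        rw [hθdef, hwdef]
        field_simp
        ring
      rw [heq, div_le_iff₀ hRpos]
      have h1 : B * (r s - max 0 (r s - τ)) ≤ B * τ := mul_le_mul_of_nonneg_left hmin hBpos.le
      rw [mul_sub] at h1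
      nlinarith [hBτ]
    calc 1/2 * ∑ m, |C s m - ((1 - θ) * Dd (some m)
            + θ * ((∑ t, w t * C t m) + (1 - W) * C sm m) + (if m = s then (1 - θ) * Dd none else 0))|
        ≤ 1/2 * (2 * ((1 - θ) * r s + θ * (1 - w s))) := by linarith [hsumtot]
    _ = (1 - θ) * r s + θ * (1 - w s) := by ring
    _ ≤ B := hfinal

set_option maxHeartbeats 1600000 in
/-- let `NMExt : {0,1}^n × {0,1}^n → {0,1}^k` be surjective with
(i) `NMExt(U)` `ε`-close to uniform, and (ii) for every split-state tampering
`(f₁, f₂)`, `NMExt` non-malleable with error `ε` w.r.t. the uniform distribution,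
witnessed by a distribution `Dd` on `{0,1}^k ∪ {same}` (`none = same`).
Then the scheme `Dec := NMExt`, `Enc(s) :=` uniform element of `NMExt⁻¹(s)` is a
non-malleable code with error `ε·(2^k + 1)` against split-state adversaries:
for all `(f₁, f₂)` there is a distribution `Df` on `{0,1}^k ∪ {⊥, same}`
(`none = same`, `some none = ⊥`) such that for every message `s`, the distribution
of `Dec(f(Enc(s)))` (supported on `some`-values of `Option (Fin k → Bool)`, with
`none = ⊥`) is `ε·(2^k+1)`-close to `copy(Df, s)`. -/
theorem stmt_9 (n k : ℕ) (ε : ℝ)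
    (NMExt : (Fin n → Bool) × (Fin n → Bool) → (Fin k → Bool))
    (hsurj : Function.Surjective NMExt)
    (hext : sd (fun s => ((univ.filter (fun x => NMExt x = s)).card : ℝ) / 2 ^ (2 * n))
               (fun _ => (1 : ℝ) / 2 ^ k) ≤ ε)
    (hnm : ∀ f1 f2 : (Fin n → Bool) → (Fin n → Bool),
      ∃ Dd : Option (Fin k → Bool) → ℝ, (∀ v, 0 ≤ Dd v) ∧ (∑ v, Dd v = 1) ∧
        sd (fun ab : (Fin k → Bool) × (Fin k → Bool) =>
              ((univ.filter (fun x : (Fin n → Bool) × (Fin n → Bool) =>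
                NMExt x = ab.1 ∧ NMExt (f1 x.1, f2 x.2) = ab.2)).card : ℝ) / 2 ^ (2 * n))
           (fun ab =>
              (((univ.filter (fun x => NMExt x = ab.1)).card : ℝ) / 2 ^ (2 * n)) *
                (Dd (some ab.2) + if ab.2 = ab.1 then Dd none else 0)) ≤ ε) :
    ∀ f1 f2 : (Fin n → Bool) → (Fin n → Bool),
      ∃ Df : Option (Option (Fin k → Bool)) → ℝ,
        (∀ v, 0 ≤ Df v) ∧ (∑ v, Df v = 1) ∧
        ∀ s : Fin k → Bool,
          sd (fun v : Option (Fin k → Bool) =>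
                Option.elim v (0 : ℝ) (fun m =>
                  ((univ.filter (fun x : (Fin n → Bool) × (Fin n → Bool) =>
                      NMExt x = s ∧ NMExt (f1 x.1, f2 x.2) = m)).card : ℝ) /
                    ((univ.filter (fun x => NMExt x = s)).card : ℝ)))
             (fun v => Df (some v) + if v = some s then Df none else 0)
            ≤ ε * (2 ^ k + 1) := by
  intro f1 f2
  obtain ⟨Dd, hDd0, hDd1, hDdsd⟩ := hnm f1 f2
  classical
  set cnt : (Fin k → Bool) → ℕ :=
    fun s => (univ.filter (fun x : (Fin n → Bool) × (Fin n → Bool) => NMExt x = s)).card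
    with hcnt
  set Jc : (Fin k → Bool) → (Fin k → Bool) → ℕ :=
    fun s m => (univ.filter (fun x : (Fin n → Bool) × (Fin n → Bool) =>
      NMExt x = s ∧ NMExt (f1 x.1, f2 x.2) = m)).card with hJc
  have hcnt_pos : ∀ s, 0 < cnt s := by
    intro s
    obtain ⟨x, hx⟩ := hsurj s
    exact Finset.card_pos.mpr ⟨x, Finset.mem_filter.mpr ⟨mem_univ x, hx⟩⟩
  have hNpos : (0:ℝ) < 2 ^ (2*n) := by positivity
  have hcnt_sum : ∑ s, cnt s = 2^(2*n) := by
    have h := Finset.card_eq_sum_card_fiberwise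
      (f := NMExt) (s := univ) (t := univ) (fun x _ => mem_univ _)
    rw [Finset.card_univ] at h
    have hcard : Fintype.card ((Fin n → Bool) × (Fin n → Bool)) = 2^(2*n) := by
      simp [Fintype.card_prod, Fintype.card_fun, two_mul, pow_add]
    rw [hcard] at h
    simpa only [hcnt] using h.symm
  have hJ_sum : ∀ s, ∑ m, Jc s m = cnt s := by
    intro s
    have h := Finset.card_eq_sum_card_fiberwise
      (f := fun x : (Fin n → Bool) × (Fin n → Bool) => NMExt (f1 x.1, f2 x.2))
      (s := univ.filter (fun x => NMExt x = s)) (t := univ) (fun x _ => mem_univ _)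
    simp only [Finset.filter_filter] at h
    simpa only [hcnt, hJc] using h.symm
  set p : (Fin k → Bool) → ℝ := fun s => (cnt s : ℝ) / 2^(2*n) with hpdef
  set C : (Fin k → Bool) → (Fin k → Bool) → ℝ := fun s m => (Jc s m : ℝ) / (cnt s : ℝ) with hCdef
  have hp : ∀ s, 0 < p s := by
    intro s
    rw [hpdef]
    exact div_pos (by exact_mod_cast hcnt_pos s) hNpos
  have hpsum : ∑ s, p s = 1 := by
    simp only [hpdef]
    rw [← Finset.sum_div]
    rw [show ∑ s, (cnt s : ℝ) = (2:ℝ)^(2*n) by exact_mod_cast congrArg Nat.cast hcnt_sum]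
    exact div_self hNpos.ne'
  have hC0 : ∀ s m, 0 ≤ C s m := by
    intro s m; rw [hCdef]; positivity
  have hC1 : ∀ s, ∑ m, C s m = 1 := by
    intro s
    simp only [hCdef]
    rw [← Finset.sum_div]
    rw [show ∑ m, (Jc s m : ℝ) = (cnt s : ℝ) by exact_mod_cast congrArg Nat.cast (hJ_sum s)]
    exact div_self (by exact_mod_cast (hcnt_pos s).ne')
  have hcardM : (Fintype.card (Fin k → Bool) : ℝ) = 2^k := by
    have h : Fintype.card (Fin k → Bool) = 2^k := by simp [Fintype.card_fun]
    rw [h]; push_cast; ring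
  have hext' : 1/2 * ∑ s, |p s - 1/(Fintype.card (Fin k → Bool) : ℝ)| ≤ ε := by
    rw [hcardM]
    unfold sd at hext
    simpa only [hpdef, hcnt] using hext
  have hnm' : ∑ s, p s * (1/2 * ∑ m, |C s m - (Dd (some m) + if m = s then Dd none else 0)|) ≤ ε := by
    have hne1 : ∀ s, (cnt s : ℝ) ≠ 0 := fun s => by exact_mod_cast (hcnt_pos s).ne'
    have key : ∀ s m, p s * |C s m - (Dd (some m) + if m = s then Dd none else 0)|
        = |(Jc s m : ℝ)/2^(2*n) - p s * (Dd (some m) + if m = s then Dd none else 0)| := by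
      intro s m
      have hpc : p s * C s m = (Jc s m : ℝ)/2^(2*n) := by
        simp only [hpdef, hCdef]
        rw [div_mul_div_comm, mul_comm ((2:ℝ)^(2*n)) ((cnt s : ℝ)), mul_div_mul_left _ _ (hne1 s)]
      rw [show (Jc s m : ℝ)/2^(2*n) - p s * (Dd (some m) + if m = s then Dd none else 0)
            = p s * (C s m - (Dd (some m) + if m = s then Dd none else 0)) by rw [mul_sub, hpc]]
      rw [abs_mul, abs_of_nonneg (hp s).le]
    have hstep : ∑ s, p s * (1/2 * ∑ m, |C s m - (Dd (some m) + if m = s then Dd none else 0)|)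
        = 1/2 * ∑ s, ∑ m, |(Jc s m : ℝ)/2^(2*n)
            - p s * (Dd (some m) + if m = s then Dd none else 0)| := by
      simp only [Finset.mul_sum]
      refine Finset.sum_congr rfl fun s _ => ?_
      refine Finset.sum_congr rfl fun m _ => ?_
      rw [← key s m]
      ring
    rw [hstep]
    unfold sd at hDdsd
    rw [Fintype.sum_prod_type] at hDdsd
    simpa only [hJc, hpdef, hcnt] using hDdsd
  obtain ⟨Dn, Ds, hDn0, hDs0, hsum1, hbound⟩ :=
    nm_core ε p C Dd hp hC0 hC1 hDd0 hDd1 hpsum hext' hnm'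
  refine ⟨fun v => Option.elim v Dn (fun u => Option.elim u 0 Ds), ?_, ?_, ?_⟩
  · intro v
    rcases v with _ | u
    · exact hDn0
    rcases u with _ | m
    · exact le_refl 0
    · exact hDs0 m
  · rw [Fintype.sum_option, Fintype.sum_option]
    simp only [Option.elim_none, Option.elim_some]
    rw [zero_add]
    exact hsum1
  · intro s
    have h := hbound s
    rw [hcardM] at h
    unfold sd
    rw [Fintype.sum_option]
    have hnone : |Option.elim (none : Option (Fin k → Bool)) (0:ℝ) (fun m =>
          ((univ.filter (fun x : (Fin n → Bool) × (Fin n → Bool) =>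
            NMExt x = s ∧ NMExt (f1 x.1, f2 x.2) = m)).card : ℝ) /
            ((univ.filter (fun x => NMExt x = s)).card : ℝ))
        - ((Option.elim (some (none : Option (Fin k → Bool))) Dn (fun u => Option.elim u 0 Ds))
          + if (none : Option (Fin k → Bool)) = some s then
              Option.elim (none : Option (Option (Fin k → Bool))) Dn (fun u => Option.elim u 0 Ds)
            else 0)| = 0 := by
      simp
    rw [hnone, zero_add]
    have hsome : ∀ m : Fin k → Bool,
        |Option.elim (some m) (0:ℝ) (fun m =>
          ((univ.filter (fun x : (Fin n → Bool) × (Fin n → Bool) =>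
            NMExt x = s ∧ NMExt (f1 x.1, f2 x.2) = m)).card : ℝ) /
            ((univ.filter (fun x => NMExt x = s)).card : ℝ))
        - ((Option.elim (some (some m)) Dn (fun u => Option.elim u 0 Ds))
          + if (some m : Option (Fin k → Bool)) = some s then
              Option.elim (none : Option (Option (Fin k → Bool))) Dn (fun u => Option.elim u 0 Ds)
            else 0)|
        = |C s m - (Ds m + if m = s then Dn else 0)| := by
      intro m
      simp only [Option.elim_some, Option.elim_none, Option.some.injEq, hCdef, hJc, hcnt]
    rw [Finset.sum_congr rfl (fun m _ => hsome m)]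
    exact h
end

section
/- Let NMExt: {0,1}^n × {0,1}^n → {0,1}^m be a relaxed two-source non-malleable (k₁ - log(1/ε), k₂ - log(1/ε), ε)-extractor. Then NMExt is a (full) two-source non-malleable (k₁, k₂, 4ε)-extractor; in particular, tampering functions with fixed points can be handled at the cost of a factor-4 loss in error and a log(1/ε) loss in each entropy requirement. -/
open scoped Classical
open Finset

/-- A probability mass function on a finite type. -/
def isDist {α : Type*} [Fintype α] (p : α → ℝ) : Prop :=
  (∀ a, 0 ≤ p a) ∧ ∑ a, p a = 1

/-- Min-entropy at least `k`: every point has mass at most `2^{-k}`. -/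
def minEnt {α : Type*} [Fintype α] (p : α → ℝ) (k : ℝ) : Prop :=
  ∀ a, p a ≤ (2 : ℝ) ^ (-k)

/-- Product distribution of two sources on `{0,1}^n`. -/
def prodDist {n : ℕ} (p q : (Fin n → Bool) → ℝ) :
    ((Fin n → Bool) × (Fin n → Bool)) → ℝ :=
  fun z => p z.1 * q z.2

/-- `g` is a non-malleable function with error `ε` w.r.t. the input distribution `p`
and tampering function `F`: there is a distribution `D` on outputs extended by `same`
(`none`) such that `(g(X), g(F(X)))` is `ε`-close to `(g(X), copy(Y', g(X)))` for
independent `Y' ~ D`. -/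
def NMFun {σ : Type*} [Fintype σ] {m : ℕ}
    (g : σ → (Fin m → Bool)) (p : σ → ℝ) (F : σ → σ) (ε : ℝ) : Prop :=
  ∃ D : Option (Fin m → Bool) → ℝ, isDist D ∧
    sd (fun ab : (Fin m → Bool) × (Fin m → Bool) =>
          ∑ z, if g z = ab.1 ∧ g (F z) = ab.2 then p z else 0)
       (fun ab =>
          (∑ z, if g z = ab.1 then p z else 0) *
            (D (some ab.2) + if ab.2 = ab.1 then D none else 0)) ≤ ε

/-- Two-source non-malleable `(k₁,k₂,ε)`-extractor (tampering functions may have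
fixed points). -/
def isNMExt {n m : ℕ} (NMExt : ((Fin n → Bool) × (Fin n → Bool)) → (Fin m → Bool))
    (k₁ k₂ ε : ℝ) : Prop :=
  ∀ p q : (Fin n → Bool) → ℝ, isDist p → isDist q → minEnt p k₁ → minEnt q k₂ →
    (sd (fun a => ∑ z, if NMExt z = a then prodDist p q z else 0)
        (fun _ => (1 : ℝ) / 2 ^ m) ≤ ε)
    ∧ ∀ f1 f2 : (Fin n → Bool) → (Fin n → Bool),
        NMFun NMExt (prodDist p q) (fun z => (f1 z.1, f2 z.2)) ε

/-- Relaxed two-source non-malleable `(k₁,k₂,ε)`-extractor: the non-malleability is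
required only for tampering functions with no fixed points (also for the one-sided
tamperings). -/
def isRelaxedNMExt {n m : ℕ}
    (NMExt : ((Fin n → Bool) × (Fin n → Bool)) → (Fin m → Bool))
    (k₁ k₂ ε : ℝ) : Prop :=
  ∀ p q : (Fin n → Bool) → ℝ, isDist p → isDist q → minEnt p k₁ → minEnt q k₂ →
    (sd (fun a => ∑ z, if NMExt z = a then prodDist p q z else 0)
        (fun _ => (1 : ℝ) / 2 ^ m) ≤ ε)
    ∧ ∀ f1 f2 : (Fin n → Bool) → (Fin n → Bool),
        (∀ x, f1 x ≠ x) → (∀ x, f2 x ≠ x) →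
          NMFun NMExt (prodDist p q) (fun z => (f1 z.1, z.2)) ε ∧
          NMFun NMExt (prodDist p q) (fun z => (z.1, f2 z.2)) ε ∧
          NMFun NMExt (prodDist p q) (fun z => (f1 z.1, f2 z.2)) ε

namespace S10
set_option linter.unusedSectionVars false

variable {σ τ ι : Type*} [Fintype σ] [Fintype τ] [Fintype ι]

noncomputable def push (h : σ → τ) (p : σ → ℝ) : τ → ℝ :=
  fun t => ∑ z, if h z = t then p z else 0

noncomputable def st (M : τ → ℝ) (D : Option τ → ℝ) : τ × τ → ℝ :=
  fun ab => M ab.1 * (D (some ab.2) + if ab.2 = ab.1 then D none else 0)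

noncomputable def dnone : Option τ → ℝ := fun o => if o = none then 1 else 0

lemma push_sum (h : σ → τ) (p : σ → ℝ) : ∑ t, push h p t = ∑ z, p z := by
  unfold push; rw [Finset.sum_comm]; apply Finset.sum_congr rfl; intro z _; simp

lemma sd_self (p : σ → ℝ) : sd p p = 0 := by
  simp [sd]

lemma sd_comm (p q : σ → ℝ) : sd p q = sd q p := by
  unfold sd; congr 1; apply Finset.sum_congr rfl; intro a _; exact abs_sub_comm _ _

lemma sd_triangle (p q r : σ → ℝ) : sd p r ≤ sd p q + sd q r := by
  unfold sd
  rw [← mul_add]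
  apply mul_le_mul_of_nonneg_left _ (by norm_num : (0:ℝ) ≤ 1/2)
  rw [← Finset.sum_add_distrib]
  apply Finset.sum_le_sum
  intro a _
  calc |p a - r a| = |(p a - q a) + (q a - r a)| := by ring_nf
    _ ≤ |p a - q a| + |q a - r a| := abs_add_le _ _

lemma sd_nonneg (p q : σ → ℝ) : 0 ≤ sd p q := by
  apply mul_nonneg (by norm_num)
  exact Finset.sum_nonneg fun a _ => abs_nonneg _

lemma sd_le_one (p q : σ → ℝ) (hp : isDist p) (hq : isDist q) : sd p q ≤ 1 := by
  unfold sd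
  have h : ∑ a, |p a - q a| ≤ ∑ a, (p a + q a) := by
    apply Finset.sum_le_sum
    intro a _
    calc |p a - q a| ≤ |p a| + |q a| := abs_sub _ _
      _ = p a + q a := by rw [abs_of_nonneg (hp.1 a), abs_of_nonneg (hq.1 a)]
  calc (1/2 : ℝ) * ∑ a, |p a - q a| ≤ (1/2) * ∑ a, (p a + q a) := by
        apply mul_le_mul_of_nonneg_left h (by norm_num)
    _ = 1 := by rw [Finset.sum_add_distrib, hp.2, hq.2]; norm_num

lemma push_nonneg (h : σ → τ) (p : σ → ℝ) (hp : ∀ z, 0 ≤ p z) : ∀ t, 0 ≤ push h p t :=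
  fun t => Finset.sum_nonneg fun z _ => by split <;> simp [hp z]

lemma push_isDist (h : σ → τ) (p : σ → ℝ) (hp : isDist p) : isDist (push h p) :=
  ⟨push_nonneg h p hp.1, by rw [push_sum, hp.2]⟩

/-- mixture decomposition commutes with push -/
lemma push_mix (h : σ → τ) (p : σ → ℝ) (w : ι → ℝ) (P : ι → σ → ℝ)
    (hmix : ∀ z, p z = ∑ i, w i * P i z) (t : τ) :
    push h p t = ∑ i, w i * push h (P i) t := by
  unfold push
  have : ∀ z, (if h z = t then p z else 0) = ∑ i, w i * (if h z = t then P i z else 0) := by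
    intro z
    split
    · rw [hmix z]
    · simp
  rw [Finset.sum_congr rfl (fun z _ => this z), Finset.sum_comm]
  apply Finset.sum_congr rfl
  intro i _
  rw [Finset.mul_sum]

/-- sd of mixtures -/
lemma sd_mix (A B : τ → ℝ) (w : ι → ℝ) (Ai Bi : ι → τ → ℝ)
    (hw : ∀ i, 0 ≤ w i)
    (hA : ∀ t, A t = ∑ i, w i * Ai i t) (hB : ∀ t, B t = ∑ i, w i * Bi i t) :
    sd A B ≤ ∑ i, w i * sd (Ai i) (Bi i) := by
  unfold sd
  have h1 : ∀ t, |A t - B t| ≤ ∑ i, w i * |Ai i t - Bi i t| := by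
    intro t
    rw [hA, hB, ← Finset.sum_sub_distrib]
    calc |∑ i, (w i * Ai i t - w i * Bi i t)| ≤ ∑ i, |w i * Ai i t - w i * Bi i t| :=
          Finset.abs_sum_le_sum_abs _ _
      _ = ∑ i, w i * |Ai i t - Bi i t| := by
          apply Finset.sum_congr rfl; intro i _
          rw [← mul_sub, abs_mul, abs_of_nonneg (hw i)]
  have hrhs : ∑ i, w i * ((1/2 : ℝ) * ∑ t, |Ai i t - Bi i t|) = (1/2) * ∑ i, w i * ∑ t, |Ai i t - Bi i t| := by
    rw [Finset.mul_sum]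
    apply Finset.sum_congr rfl; intro i _; ring
  rw [hrhs]
  apply mul_le_mul_of_nonneg_left _ (by norm_num : (0:ℝ) ≤ 1/2)
  calc ∑ t, |A t - B t| ≤ ∑ t, ∑ i, w i * |Ai i t - Bi i t| :=
        Finset.sum_le_sum fun t _ => h1 t
    _ = ∑ i, w i * ∑ t, |Ai i t - Bi i t| := by
        rw [Finset.sum_comm]
        apply Finset.sum_congr rfl; intro i _
        rw [← Finset.mul_sum]

/-- changing the underlying distribution -/
lemma sd_push_dist (h : σ → τ) (p p' : σ → ℝ) :
    sd (push h p) (push h p') ≤ sd p p' := by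
  unfold sd
  apply mul_le_mul_of_nonneg_left _ (by norm_num : (0:ℝ) ≤ 1/2)
  have key : ∀ t, |push h p t - push h p' t| ≤ push h (fun z => |p z - p' z|) t := by
    intro t
    unfold push
    rw [← Finset.sum_sub_distrib]
    calc |∑ z, ((if h z = t then p z else 0) - (if h z = t then p' z else 0))|
        ≤ ∑ z, |(if h z = t then p z else 0) - (if h z = t then p' z else 0)| :=
          Finset.abs_sum_le_sum_abs _ _
      _ = ∑ z, (if h z = t then |p z - p' z| else 0) := by
          apply Finset.sum_congr rfl; intro z _; split <;> simp
  calc ∑ t, |push h p t - push h p' t| ≤ ∑ t, push h (fun z => |p z - p' z|) t :=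
        Finset.sum_le_sum fun t _ => key t
    _ = ∑ z, |p z - p' z| := push_sum _ _

/-- changing the map: cost is the mass where maps differ -/
lemma sd_push_map (h h' : σ → τ) (p : σ → ℝ) (hp : ∀ z, 0 ≤ p z) :
    sd (push h p) (push h' p) ≤ ∑ z, if h z ≠ h' z then p z else 0 := by
  unfold sd
  have key : ∀ t, |push h p t - push h' p t| ≤
      ∑ z, ((if h z ≠ h' z then p z else 0) * ((if h z = t then 1 else 0) + (if h' z = t then 1 else 0))) := by
    intro t
    unfold push
    rw [← Finset.sum_sub_distrib]
    refine le_trans (Finset.abs_sum_le_sum_abs _ _) (Finset.sum_le_sum ?_)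
    intro z _
    by_cases hz : h z = h' z
    · simp [hz]
    · simp only [if_pos (show h z ≠ h' z from hz)]
      by_cases h1 : h z = t <;> by_cases h2 : h' z = t <;>
        simp [h1, h2, abs_of_nonneg (hp z), hz] <;> nlinarith [hp z, abs_nonneg (p z)]
  calc (1/2 : ℝ) * ∑ t, |push h p t - push h' p t|
      ≤ (1/2) * ∑ t, ∑ z, ((if h z ≠ h' z then p z else 0) * ((if h z = t then 1 else 0) + (if h' z = t then 1 else 0))) := by
        apply mul_le_mul_of_nonneg_left (Finset.sum_le_sum fun t _ => key t) (by norm_num)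
    _ = (1/2) * ∑ z, ((if h z ≠ h' z then p z else 0) * ∑ t, ((if h z = t then 1 else 0) + (if h' z = t then 1 else 0))) := by
        rw [Finset.sum_comm]
        congr 1
        apply Finset.sum_congr rfl; intro z _
        rw [Finset.mul_sum]
    _ = (1/2) * ∑ z, ((if h z ≠ h' z then p z else 0) * 2) := by
        congr 1
        apply Finset.sum_congr rfl; intro z _
        congr 1
        rw [Finset.sum_add_distrib]
        simp
        norm_num
    _ = ∑ z, if h z ≠ h' z then p z else 0 := by
        rw [← Finset.sum_mul]; ring

lemma dnone_isDist : isDist (dnone : Option τ → ℝ) := by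
  constructor
  · intro o; unfold dnone; split <;> norm_num
  · unfold dnone
    rw [Fintype.sum_option]
    simp

lemma kernel_sum (D : Option τ → ℝ) (hD : isDist D) (a : τ) :
    ∑ b, (D (some b) + if b = a then D none else 0) = 1 := by
  rw [Finset.sum_add_distrib]
  have h2 : ∑ b, (if b = a then D none else 0) = D none := by simp
  rw [h2]
  have := hD.2
  rw [Fintype.sum_option] at this
  linarith

lemma st_isDist (M : τ → ℝ) (D : Option τ → ℝ) (hM : isDist M) (hD : isDist D) :
    isDist (st M D) := by
  constructor
  · intro ab
    apply mul_nonneg (hM.1 _)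
    apply add_nonneg (hD.1 _)
    split
    · exact hD.1 _
    · exact le_refl 0
  · rw [Fintype.sum_prod_type]
    have : ∀ a : τ, ∑ b : τ, st M D (a, b) = M a := by
      intro a
      have e : ∀ b : τ, st M D (a, b) = M a * (D (some b) + if b = a then D none else 0) :=
        fun b => rfl
      rw [Finset.sum_congr rfl (fun b _ => e b), ← Finset.mul_sum, kernel_sum D hD a, mul_one]
    rw [Finset.sum_congr rfl (fun a _ => this a), hM.2]

/-- data processing for `st` in the first argument -/
lemma sd_st_left (M M' : τ → ℝ) (D : Option τ → ℝ) (hD : isDist D) :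
    sd (st M D) (st M' D) ≤ sd M M' := by
  unfold sd
  apply mul_le_mul_of_nonneg_left _ (by norm_num : (0:ℝ) ≤ 1/2)
  rw [Fintype.sum_prod_type]
  have : ∀ a : τ, ∑ b : τ, |st M D (a, b) - st M' D (a, b)| = |M a - M' a| := by
    intro a
    have est : ∀ b : τ, st M D (a, b) - st M' D (a, b) =
        M a * (D (some b) + if b = a then D none else 0) -
        M' a * (D (some b) + if b = a then D none else 0) := fun b => rfl
    have : ∀ b : τ, |M a * (D (some b) + if b = a then D none else 0) -
        M' a * (D (some b) + if b = a then D none else 0)| =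
        |M a - M' a| * (D (some b) + if b = a then D none else 0) := by
      intro b
      rw [← sub_mul, abs_mul]
      congr 1
      apply abs_of_nonneg
      apply add_nonneg (hD.1 _)
      split
      · exact hD.1 _
      · exact le_refl 0
    calc ∑ b : τ, |st M D (a, b) - st M' D (a, b)|
        = ∑ b : τ, |M a - M' a| * (D (some b) + if b = a then D none else 0) := by
          apply Finset.sum_congr rfl; intro b _; rw [est b, this b]
      _ = |M a - M' a| := by rw [← Finset.mul_sum, kernel_sum D hD a, mul_one]
  rw [Finset.sum_congr rfl (fun a _ => this a)]

/-- `st` is linear in `D` -/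
lemma st_mix (M : τ → ℝ) (w : ι → ℝ) (Di : ι → Option τ → ℝ) (ab : τ × τ) :
    st M (fun o => ∑ i, w i * Di i o) ab = ∑ i, w i * st M (Di i) ab := by
  unfold st
  by_cases hc : ab.2 = ab.1
  · simp only [if_pos hc]
    rw [mul_add, Finset.mul_sum, Finset.mul_sum, ← Finset.sum_add_distrib]
    apply Finset.sum_congr rfl; intro i _; ring
  · simp only [if_neg hc]
    rw [add_zero, Finset.mul_sum]
    apply Finset.sum_congr rfl; intro i _; ring

/-- the pair-push written with an `∧` of conditions (matches `NMFun`) -/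
lemma push_pair_eq (g : σ → τ) (F : σ → σ) (p : σ → ℝ) :
    push (fun z => (g z, g (F z))) p =
      fun ab => ∑ z, if g z = ab.1 ∧ g (F z) = ab.2 then p z else 0 := by
  funext ab
  unfold push
  apply Finset.sum_congr rfl
  intro z _
  congr 1
  rw [Prod.ext_iff]

/-- identity tampering is matched exactly by the `same`-distribution -/
lemma push_pair_id (g : σ → τ) (F : σ → σ) (p : σ → ℝ)
    (hF : ∀ z, p z ≠ 0 → F z = z) :
    push (fun z => (g z, g (F z))) p = st (push g p) dnone := by
  funext ab
  have e1 : (dnone (some ab.2) : ℝ) = 0 := by unfold dnone; simp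
  have e2 : (dnone (none : Option τ) : ℝ) = 1 := by unfold dnone; simp
  unfold push st
  rw [e1, e2, Finset.sum_mul]
  apply Finset.sum_congr rfl
  intro z _
  by_cases hp : p z = 0
  · simp [hp]
  · have hFz : F z = z := hF z hp
    by_cases h1 : g z = ab.1
    · by_cases h2 : ab.2 = ab.1
      · rw [if_pos (show (g z, g (F z)) = ab by
            rw [hFz, Prod.ext_iff]; exact ⟨h1, by rw [h2]; exact h1⟩),
          if_pos h1, if_pos h2]
        ring
      · rw [if_neg (show (g z, g (F z)) ≠ ab from fun he => by
            rw [hFz, Prod.ext_iff] at he; exact h2 (he.2.symm.trans he.1)),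
          if_pos h1, if_neg h2]
        ring
    · rw [if_neg (show (g z, g (F z)) ≠ ab from fun he => by
          rw [hFz, Prod.ext_iff] at he; exact h1 he.1),
        if_neg h1]
      ring

/-- Master lemma: non-malleability of a mixture. -/
lemma master (g : σ → τ) (p : σ → ℝ) (F : σ → σ) (w : ι → ℝ) (P : ι → σ → ℝ)
    (G : ι → σ → σ) (ε γ δ : ℝ)
    (hw : ∀ i, 0 ≤ w i) (hw1 : ∑ i, w i = 1)
    (hmix : ∀ z, p z = ∑ i, w i * P i z)
    (hPpos : ∀ i z, 0 ≤ P i z)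
    (hNM : ∀ i, ∃ D, isDist D ∧
      sd (push (fun z => (g z, g (G i z))) (P i)) (st (push g (P i)) D) ≤ ε)
    (hmar : ∀ i, sd (push g (P i)) (push g p) ≤ γ)
    (hmiss : ∑ i, w i * (∑ z, if F z ≠ G i z then P i z else 0) ≤ δ) :
    ∃ D, isDist D ∧
      sd (push (fun z => (g z, g (F z))) p) (st (push g p) D) ≤ ε + γ + δ := by
  choose D hDdist hDsd using hNM
  refine ⟨fun o => ∑ i, w i * D i o, ⟨?_, ?_⟩, ?_⟩
  · intro o; exact Finset.sum_nonneg fun i _ => mul_nonneg (hw i) ((hDdist i).1 o)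
  · rw [Finset.sum_comm]
    calc ∑ i, ∑ o : Option τ, w i * D i o = ∑ i, w i * ∑ o : Option τ, D i o := by
          apply Finset.sum_congr rfl; intro i _; rw [Finset.mul_sum]
      _ = ∑ i, w i := by
          apply Finset.sum_congr rfl; intro i _; rw [(hDdist i).2, mul_one]
      _ = 1 := hw1
  · have hA : ∀ t, push (fun z => (g z, g (F z))) p t
        = ∑ i, w i * push (fun z => (g z, g (F z))) (P i) t :=
      fun t => push_mix _ p w P hmix t
    have hB : ∀ t, st (push g p) (fun o => ∑ i, w i * D i o) t
        = ∑ i, w i * st (push g p) (D i) t := fun t => st_mix _ w D t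
    refine le_trans (sd_mix _ _ w _ _ hw hA hB) ?_
    have key : ∀ i, sd (push (fun z => (g z, g (F z))) (P i)) (st (push g p) (D i))
        ≤ (∑ z, if F z ≠ G i z then P i z else 0) + ε + γ := by
      intro i
      have h1 : sd (push (fun z => (g z, g (F z))) (P i))
          (push (fun z => (g z, g (G i z))) (P i))
          ≤ ∑ z, if F z ≠ G i z then P i z else 0 := by
        refine le_trans (sd_push_map _ _ (P i) (hPpos i)) ?_
        apply Finset.sum_le_sum
        intro z _
        by_cases hz : F z = G i z
        · rw [if_neg (not_not_intro (show (g z, g (F z)) = (g z, g (G i z)) by rw [hz]))]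
          split
          · exact hPpos i z
          · exact le_refl 0
        · rw [if_pos hz]
          split
          · exact le_refl _
          · exact hPpos i z
      have h2 := hDsd i
      have h3 : sd (st (push g (P i)) (D i)) (st (push g p) (D i)) ≤ γ :=
        le_trans (sd_st_left _ _ _ (hDdist i)) (hmar i)
      calc sd (push (fun z => (g z, g (F z))) (P i)) (st (push g p) (D i))
          ≤ sd (push (fun z => (g z, g (F z))) (P i))
              (push (fun z => (g z, g (G i z))) (P i))
            + sd (push (fun z => (g z, g (G i z))) (P i)) (st (push g p) (D i)) :=
            sd_triangle _ _ _
        _ ≤ (∑ z, if F z ≠ G i z then P i z else 0) + (ε + γ) :=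
            add_le_add h1 (le_trans (sd_triangle _ (st (push g (P i)) (D i)) _)
              (add_le_add h2 h3))
        _ = (∑ z, if F z ≠ G i z then P i z else 0) + ε + γ := by ring
    calc ∑ i, w i * sd (push (fun z => (g z, g (F z))) (P i)) (st (push g p) (D i))
        ≤ ∑ i, w i * ((∑ z, if F z ≠ G i z then P i z else 0) + ε + γ) :=
          Finset.sum_le_sum fun i _ => mul_le_mul_of_nonneg_left (key i) (hw i)
      _ = (∑ i, w i * (∑ z, if F z ≠ G i z then P i z else 0))
            + (∑ i, w i) * ε + (∑ i, w i) * γ := by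
          rw [Finset.sum_mul, Finset.sum_mul, ← Finset.sum_add_distrib, ← Finset.sum_add_distrib]
          apply Finset.sum_congr rfl; intro i _; ring
      _ ≤ ε + γ + δ := by rw [hw1]; linarith [hmiss]

noncomputable def tamper {β : Type*} (f t : β → β) : β → β := fun x => if f x = x then t x else f x

lemma tamper_fpf {β : Type*} (f t : β → β) (ht : ∀ x, t x ≠ x) : ∀ x, tamper f t x ≠ x := by
  intro x
  unfold tamper
  split
  · exact ht x
  · assumption

lemma mass_split {β : Type*} [Fintype β] (f : β → β) (p : β → ℝ) :
    (∑ x, if f x = x then p x else 0) + (∑ x, if f x ≠ x then p x else 0) = ∑ x, p x := by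
  rw [← Finset.sum_add_distrib]
  apply Finset.sum_congr rfl
  intro x _
  by_cases hx : f x = x
  · rw [if_pos hx, if_neg (not_not_intro hx), add_zero]
  · rw [if_neg hx, if_pos hx, zero_add]

lemma minEnt_mono {β : Type*} [Fintype β] (p : β → ℝ) (k k' : ℝ) (h : minEnt p k)
    (hk : k' ≤ k) : minEnt p k' := by
  intro a
  refine le_trans (h a) ?_
  rw [Real.rpow_le_rpow_left_iff (by norm_num : (1:ℝ) < 2)]
  linarith

/-- per-side decomposition -/
lemma side {β : Type*} [Fintype β] (f t : β → β) (p : β → ℝ) (hp : isDist p)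
    (k k' ε : ℝ) (hε : 0 < ε) (hε1 : ε < 1/4) (hent : minEnt p k) (hk' : k' ≤ k)
    (hpow : (2:ℝ)^(-k) * (1/ε) ≤ (2:ℝ)^(-k')) :
    ∃ (s : Bool) (w : Fin 2 → ℝ) (P : Fin 2 → β → ℝ) (c : Fin 2 → Bool),
      (∀ i, 0 ≤ w i) ∧ (∑ i, w i = 1) ∧
      (∀ x, p x = ∑ i, w i * P i x) ∧
      (∀ i, isDist (P i)) ∧ (∀ i, minEnt (P i) k') ∧
      (∑ i, w i * (∑ x, if f x ≠ (if c i then tamper f t else id) x then P i x else 0)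
          ≤ (if s then 0 else ε)) ∧
      (s = false → ∀ i, P i = p) := by
  have hent' : minEnt p k' := minEnt_mono p k k' hent hk'
  have hpos : 0 < (2:ℝ)^(-k) := Real.rpow_pos_of_pos (by norm_num) _
  set α : ℝ := ∑ x, if f x = x then p x else 0 with hα
  have hα0 : 0 ≤ α := by
    apply Finset.sum_nonneg
    intro x _
    split
    · exact hp.1 x
    · exact le_refl 0
  have hβ0 : 0 ≤ ∑ x, if f x ≠ x then p x else 0 := by
    apply Finset.sum_nonneg
    intro x _
    split
    · exact hp.1 x
    · exact le_refl 0
  have hsplit := mass_split f p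
  rw [hp.2] at hsplit
  have hα1 : α ≤ 1 := by rw [hα]; linarith
  by_cases hA : α < ε
  · refine ⟨false, ![1, 0], ![p, p], ![true, true], ?_, ?_, ?_, ?_, ?_, ?_, ?_⟩
    · rw [Fin.forall_fin_two]
      constructor <;> norm_num
    · rw [Fin.sum_univ_two]
      show (1:ℝ) + 0 = 1
      norm_num
    · intro x
      rw [Fin.sum_univ_two]
      show p x = 1 * p x + 0 * p x
      ring
    · rw [Fin.forall_fin_two]
      exact ⟨hp, hp⟩
    · rw [Fin.forall_fin_two]
      exact ⟨hent', hent'⟩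
    · rw [Fin.sum_univ_two]
      show 1 * (∑ x, if f x ≠ tamper f t x then p x else 0)
          + 0 * (∑ x, if f x ≠ tamper f t x then p x else 0) ≤ ε
      have hm : (∑ x, if f x ≠ tamper f t x then p x else 0) ≤ α := by
        rw [hα]
        apply Finset.sum_le_sum
        intro x _
        by_cases hx : f x = x
        · rw [if_pos hx]
          split
          · exact le_refl _
          · exact hp.1 x
        · rw [if_neg hx, if_neg (not_not_intro (show f x = tamper f t x by
            unfold tamper; rw [if_neg hx]))]
      linarith
    · intro _
      rw [Fin.forall_fin_two]
      exact ⟨rfl, rfl⟩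
  · by_cases hB : 1 - α < ε
    · refine ⟨false, ![1, 0], ![p, p], ![false, false], ?_, ?_, ?_, ?_, ?_, ?_, ?_⟩
      · rw [Fin.forall_fin_two]
        constructor <;> norm_num
      · rw [Fin.sum_univ_two]
        show (1:ℝ) + 0 = 1
        norm_num
      · intro x
        rw [Fin.sum_univ_two]
        show p x = 1 * p x + 0 * p x
        ring
      · rw [Fin.forall_fin_two]
        exact ⟨hp, hp⟩
      · rw [Fin.forall_fin_two]
        exact ⟨hent', hent'⟩
      · rw [Fin.sum_univ_two]
        show 1 * (∑ x, if f x ≠ x then p x else 0)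
            + 0 * (∑ x, if f x ≠ x then p x else 0) ≤ ε
        have : (∑ x, if f x ≠ x then p x else 0) = 1 - α := by
          rw [hα]; linarith
        linarith
      · intro _
        rw [Fin.forall_fin_two]
        exact ⟨rfl, rfl⟩
    · push_neg at hA hB
      have hαpos : 0 < α := lt_of_lt_of_le hε hA
      have hβpos : 0 < 1 - α := by linarith
      refine ⟨true, ![α, 1 - α],
        ![fun x => (if f x = x then p x else 0) / α,
          fun x => (if f x = x then 0 else p x) / (1 - α)], ![false, true],
        ?_, ?_, ?_, ?_, ?_, ?_, ?_⟩
      · rw [Fin.forall_fin_two]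
        constructor
        · show 0 ≤ α
          linarith
        · show 0 ≤ 1 - α
          linarith
      · rw [Fin.sum_univ_two]
        show α + (1 - α) = 1
        ring
      · intro x
        rw [Fin.sum_univ_two]
        show p x = α * ((if f x = x then p x else 0) / α)
            + (1 - α) * ((if f x = x then 0 else p x) / (1 - α))
        rw [mul_div_cancel₀ _ (ne_of_gt hαpos), mul_div_cancel₀ _ (ne_of_gt hβpos)]
        by_cases hx : f x = x
        · rw [if_pos hx, if_pos hx]; ring
        · rw [if_neg hx, if_neg hx]; ring
      · rw [Fin.forall_fin_two]
        constructor
        · constructor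
          · intro x
            show 0 ≤ (if f x = x then p x else 0) / α
            apply div_nonneg _ (le_of_lt hαpos)
            split
            · exact hp.1 x
            · exact le_refl 0
          · show (∑ x, (if f x = x then p x else 0) / α) = 1
            rw [← Finset.sum_div, div_eq_one_iff_eq (ne_of_gt hαpos)]
        · constructor
          · intro x
            show 0 ≤ (if f x = x then 0 else p x) / (1 - α)
            apply div_nonneg _ (le_of_lt hβpos)
            split
            · exact le_refl 0
            · exact hp.1 x
          · show (∑ x, (if f x = x then 0 else p x) / (1 - α)) = 1
            rw [← Finset.sum_div, div_eq_one_iff_eq (ne_of_gt hβpos)]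
            have e : (∑ x, if f x = x then (0:ℝ) else p x)
                = ∑ x, if f x ≠ x then p x else 0 := by
              apply Finset.sum_congr rfl
              intro x _
              by_cases hx : f x = x
              · rw [if_pos hx, if_neg (not_not_intro hx)]
              · rw [if_neg hx, if_pos hx]
            rw [e]; linarith
      · have hub : ∀ (num d : ℝ), 0 < d → ε ≤ d → num ≤ (2:ℝ)^(-k) →
            num / d ≤ (2:ℝ)^(-k') := by
          intro num d hd hεd hnum
          calc num / d ≤ (2:ℝ)^(-k) / ε :=
                div_le_div₀ (le_of_lt hpos) hnum hε hεd
            _ = (2:ℝ)^(-k) * (1/ε) := by rw [div_eq_mul_one_div]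
            _ ≤ (2:ℝ)^(-k') := hpow
        rw [Fin.forall_fin_two]
        constructor
        · intro x
          show (if f x = x then p x else 0) / α ≤ (2:ℝ)^(-k')
          apply hub _ _ hαpos hA
          split
          · exact hent x
          · exact le_of_lt hpos
        · intro x
          show (if f x = x then 0 else p x) / (1 - α) ≤ (2:ℝ)^(-k')
          apply hub _ _ hβpos hB
          split
          · exact le_of_lt hpos
          · exact hent x
      · rw [Fin.sum_univ_two]
        show α * (∑ x, if f x ≠ x then (if f x = x then p x else 0) / α else 0)
            + (1 - α) * (∑ x, if f x ≠ tamper f t x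
                then (if f x = x then 0 else p x) / (1 - α) else 0) ≤ 0
        have hm0 : (∑ x, if f x ≠ x then (if f x = x then p x else 0) / α else 0) = 0 := by
          apply Finset.sum_eq_zero
          intro x _
          by_cases hx : f x = x
          · rw [if_neg (not_not_intro hx)]
          · rw [if_pos hx, if_neg hx, zero_div]
        have hm1 : (∑ x, if f x ≠ tamper f t x
            then (if f x = x then 0 else p x) / (1 - α) else 0) = 0 := by
          apply Finset.sum_eq_zero
          intro x _
          by_cases hx : f x = x
          · rw [if_pos hx, zero_div]
            split <;> rfl
          · rw [if_neg (not_not_intro (show f x = tamper f t x by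
              unfold tamper; rw [if_neg hx]))]
        rw [hm0, hm1]
        norm_num
      · intro hcon
        exact absurd hcon (by norm_num)

lemma miss_prod {β1 β2 : Type*} [Fintype β1] [Fintype β2]
    (f1 g1 : β1 → β1) (f2 g2 : β2 → β2) (P : β1 → ℝ) (Q : β2 → ℝ)
    (hP : isDist P) (hQ : isDist Q) :
    (∑ z : β1 × β2, if (f1 z.1, f2 z.2) ≠ (g1 z.1, g2 z.2) then P z.1 * Q z.2 else 0)
      ≤ (∑ x, if f1 x ≠ g1 x then P x else 0) + (∑ y, if f2 y ≠ g2 y then Q y else 0) := by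
  have step : ∀ z : β1 × β2,
      (if (f1 z.1, f2 z.2) ≠ (g1 z.1, g2 z.2) then P z.1 * Q z.2 else 0)
      ≤ (if f1 z.1 ≠ g1 z.1 then P z.1 * Q z.2 else 0)
        + (if f2 z.2 ≠ g2 z.2 then P z.1 * Q z.2 else 0) := by
    intro z
    have hPQ : 0 ≤ P z.1 * Q z.2 := mul_nonneg (hP.1 _) (hQ.1 _)
    by_cases h1 : f1 z.1 = g1 z.1
    · by_cases h2 : f2 z.2 = g2 z.2
      · rw [if_neg (not_not_intro (show (f1 z.1, f2 z.2) = (g1 z.1, g2 z.2) by rw [h1, h2])),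
          if_neg (not_not_intro h1), if_neg (not_not_intro h2)]
        norm_num
      · rw [if_pos (show (f1 z.1, f2 z.2) ≠ (g1 z.1, g2 z.2) from
            fun he => h2 (congrArg Prod.snd he)),
          if_neg (not_not_intro h1), if_pos h2]
        linarith
    · rw [if_pos (show (f1 z.1, f2 z.2) ≠ (g1 z.1, g2 z.2) from
          fun he => h1 (congrArg Prod.fst he)), if_pos h1]
      have : (0:ℝ) ≤ if f2 z.2 ≠ g2 z.2 then P z.1 * Q z.2 else 0 := by
        split
        · exact hPQ
        · exact le_refl 0
      linarith
  refine le_trans (Finset.sum_le_sum fun z _ => step z) ?_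
  rw [Finset.sum_add_distrib]
  apply add_le_add
  · rw [Fintype.sum_prod_type]
    have e : ∀ x, ∑ y, (if f1 x ≠ g1 x then P x * Q y else 0)
        = (if f1 x ≠ g1 x then P x else 0) := by
      intro x
      split
      · rw [← Finset.mul_sum, hQ.2, mul_one]
      · exact Finset.sum_const_zero
    calc ∑ x, ∑ y, (if f1 ((x, y) : β1 × β2).1 ≠ g1 (x, y).1 then P (x, y).1 * Q (x, y).2 else 0)
        = ∑ x, (if f1 x ≠ g1 x then P x else 0) :=
          Finset.sum_congr rfl fun x _ => e x
      _ ≤ ∑ x, (if f1 x ≠ g1 x then P x else 0) := le_refl _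
  · rw [Fintype.sum_prod_type]
    have e : ∀ x, ∑ y, (if f2 y ≠ g2 y then P x * Q y else 0)
        = P x * (∑ y, if f2 y ≠ g2 y then Q y else 0) := by
      intro x
      rw [Finset.mul_sum]
      apply Finset.sum_congr rfl
      intro y _
      split
      · rfl
      · rw [mul_zero]
    calc ∑ x, ∑ y, (if f2 ((x, y) : β1 × β2).2 ≠ g2 (x, y).2 then P (x, y).1 * Q (x, y).2 else 0)
        = ∑ x, P x * (∑ y, if f2 y ≠ g2 y then Q y else 0) :=
          Finset.sum_congr rfl fun x _ => e x
      _ = (∑ y, if f2 y ≠ g2 y then Q y else 0) := by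
          rw [← Finset.sum_mul, hP.2, one_mul]
      _ ≤ _ := le_refl _

lemma sum_prod_weights {ι1 ι2 : Type*} [Fintype ι1] [Fintype ι2]
    (w1 m1 : ι1 → ℝ) (w2 m2 : ι2 → ℝ)
    (hs1 : ∑ i, w1 i = 1) (hs2 : ∑ j, w2 j = 1) :
    ∑ ij : ι1 × ι2, (w1 ij.1 * w2 ij.2) * (m1 ij.1 + m2 ij.2)
      = (∑ i, w1 i * m1 i) + (∑ j, w2 j * m2 j) := by
  rw [Fintype.sum_prod_type]
  have per : ∀ i, ∑ j, (w1 i * w2 j) * (m1 i + m2 j)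
      = w1 i * m1 i + w1 i * (∑ j, w2 j * m2 j) := by
    intro i
    have e1 : ∀ j, (w1 i * w2 j) * (m1 i + m2 j)
        = w1 i * m1 i * w2 j + w1 i * (w2 j * m2 j) := fun j => by ring
    rw [Finset.sum_congr rfl fun j _ => e1 j, Finset.sum_add_distrib,
      ← Finset.mul_sum, ← Finset.mul_sum, hs2, mul_one]
  calc ∑ i, ∑ j, ((w1 (i, j).1 * w2 (i, j).2) * (m1 (i, j).1 + m2 (i, j).2))
      = ∑ i, (w1 i * m1 i + w1 i * (∑ j, w2 j * m2 j)) :=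
        Finset.sum_congr rfl fun i _ => per i
    _ = (∑ i, w1 i * m1 i) + (∑ i, w1 i) * (∑ j, w2 j * m2 j) := by
        rw [Finset.sum_add_distrib, ← Finset.sum_mul]
    _ = _ := by rw [hs1, one_mul]

/-- combined tampering-miss bound for product pieces -/
lemma miss_assemble {β1 β2 ι1 ι2 : Type*} [Fintype β1] [Fintype β2] [Fintype ι1] [Fintype ι2]
    (f1 : β1 → β1) (f2 : β2 → β2) (T1 : ι1 → β1 → β1) (T2 : ι2 → β2 → β2)
    (w1 : ι1 → ℝ) (P1 : ι1 → β1 → ℝ) (w2 : ι2 → ℝ) (P2 : ι2 → β2 → ℝ) (d1 d2 : ℝ)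
    (hw1 : ∀ i, 0 ≤ w1 i) (hs1 : ∑ i, w1 i = 1)
    (hw2 : ∀ j, 0 ≤ w2 j) (hs2 : ∑ j, w2 j = 1)
    (hP1 : ∀ i, isDist (P1 i)) (hP2 : ∀ j, isDist (P2 j))
    (hm1 : ∑ i, w1 i * (∑ x, if f1 x ≠ T1 i x then P1 i x else 0) ≤ d1)
    (hm2 : ∑ j, w2 j * (∑ y, if f2 y ≠ T2 j y then P2 j y else 0) ≤ d2) :
    ∑ ij : ι1 × ι2, (w1 ij.1 * w2 ij.2) * (∑ z : β1 × β2,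
        if (f1 z.1, f2 z.2) ≠ (T1 ij.1 z.1, T2 ij.2 z.2)
          then P1 ij.1 z.1 * P2 ij.2 z.2 else 0)
      ≤ d1 + d2 := by
  have step : ∀ ij : ι1 × ι2, (∑ z : β1 × β2,
      if (f1 z.1, f2 z.2) ≠ (T1 ij.1 z.1, T2 ij.2 z.2)
        then P1 ij.1 z.1 * P2 ij.2 z.2 else 0)
      ≤ (∑ x, if f1 x ≠ T1 ij.1 x then P1 ij.1 x else 0)
        + (∑ y, if f2 y ≠ T2 ij.2 y then P2 ij.2 y else 0) :=
    fun ij => miss_prod f1 (T1 ij.1) f2 (T2 ij.2) (P1 ij.1) (P2 ij.2) (hP1 _) (hP2 _)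
  calc ∑ ij : ι1 × ι2, (w1 ij.1 * w2 ij.2) * (∑ z : β1 × β2,
        if (f1 z.1, f2 z.2) ≠ (T1 ij.1 z.1, T2 ij.2 z.2)
          then P1 ij.1 z.1 * P2 ij.2 z.2 else 0)
      ≤ ∑ ij : ι1 × ι2, (w1 ij.1 * w2 ij.2) *
          ((∑ x, if f1 x ≠ T1 ij.1 x then P1 ij.1 x else 0)
            + (∑ y, if f2 y ≠ T2 ij.2 y then P2 ij.2 y else 0)) :=
        Finset.sum_le_sum fun ij _ => mul_le_mul_of_nonneg_left (step ij)
          (mul_nonneg (hw1 _) (hw2 _))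
    _ = (∑ i, w1 i * (∑ x, if f1 x ≠ T1 i x then P1 i x else 0))
          + (∑ j, w2 j * (∑ y, if f2 y ≠ T2 j y then P2 j y else 0)) :=
        sum_prod_weights w1 (fun i => ∑ x, if f1 x ≠ T1 i x then P1 i x else 0)
          w2 (fun j => ∑ y, if f2 y ≠ T2 j y then P2 j y else 0) hs1 hs2
    _ ≤ d1 + d2 := add_le_add hm1 hm2

lemma unif_isDist (m : ℕ) : isDist (fun _ : Fin m → Bool => (1:ℝ)/2^m) := by
  constructor
  · intro a; positivity
  · rw [Finset.sum_const, Finset.card_univ]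
    have : Fintype.card (Fin m → Bool) = 2^m := by simp
    rw [this, nsmul_eq_mul]
    push_cast
    field_simp


lemma prod_isDist {n : ℕ} (p q : (Fin n → Bool) → ℝ) (hp : isDist p) (hq : isDist q) :
    isDist (prodDist p q) := by
  constructor
  · intro z; exact mul_nonneg (hp.1 _) (hq.1 _)
  · unfold prodDist
    rw [Fintype.sum_prod_type]
    calc ∑ x, ∑ y, p ((x, y) : _ × _).1 * q ((x, y) : _ × _).2
        = ∑ x, p x * ∑ y, q y := by
          apply Finset.sum_congr rfl
          intro x _
          calc ∑ y, p ((x, y) : _ × _).1 * q ((x, y) : _ × _).2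
              = ∑ y, p x * q y := Finset.sum_congr rfl fun y _ => rfl
            _ = p x * ∑ y, q y := by rw [← Finset.mul_sum]
      _ = 1 := by rw [hq.2]; simp only [mul_one]; exact hp.2

lemma iteq {α : Sort*} {b c : Prop} (ib : Decidable b) (ic : Decidable c) (x y : α)
    (h : b ↔ c) : @ite α b ib x y = @ite α c ic x y := by
  by_cases hb : b
  · rw [if_pos hb, if_pos (h.mp hb)]
  · rw [if_neg hb, if_neg (fun hc => hb (h.mpr hc))]

lemma sd_congr {α : Type*} [Fintype α] {p p' q q' : α → ℝ} (hp : p = p') (hq : q = q') :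
    sd p q = sd p' q' := by rw [hp, hq]

end S10

/-- a relaxed two-source non-malleable
`(k₁ - log(1/ε), k₂ - log(1/ε), ε)`-extractor is a (full) two-source non-malleable
`(k₁, k₂, 4ε)`-extractor. -/
theorem stmt_10 {n m : ℕ}
    (NMExt : ((Fin n → Bool) × (Fin n → Bool)) → (Fin m → Bool))
    (k₁ k₂ ε : ℝ) (hε : 0 < ε)
    (h : isRelaxedNMExt NMExt (k₁ - Real.logb 2 (1 / ε)) (k₂ - Real.logb 2 (1 / ε)) ε) :
    isNMExt NMExt k₁ k₂ (4 * ε) := by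
  have EP : ∀ pp : ((Fin n → Bool) × (Fin n → Bool)) → ℝ,
      (fun a => ∑ z, if NMExt z = a then pp z else 0) = S10.push NMExt pp := by
    intro pp
    funext a
    unfold S10.push
    apply Finset.sum_congr rfl
    intro z _
    exact S10.iteq _ _ _ _ Iff.rfl
  have EF : ∀ (pp : ((Fin n → Bool) × (Fin n → Bool)) → ℝ)
      (F : ((Fin n → Bool) × (Fin n → Bool)) → ((Fin n → Bool) × (Fin n → Bool))),
      (fun ab : (Fin m → Bool) × (Fin m → Bool) =>
        ∑ z, if NMExt z = ab.1 ∧ NMExt (F z) = ab.2 then pp z else 0)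
      = S10.push (fun z => (NMExt z, NMExt (F z))) pp := by
    intro pp F
    funext ab
    unfold S10.push
    apply Finset.sum_congr rfl
    intro z _
    exact S10.iteq _ _ _ _ (Iff.symm Prod.ext_iff)
  have ES : ∀ (pp : ((Fin n → Bool) × (Fin n → Bool)) → ℝ)
      (D : Option (Fin m → Bool) → ℝ),
      (fun ab : (Fin m → Bool) × (Fin m → Bool) =>
        (∑ z, if NMExt z = ab.1 then pp z else 0) *
          (D (some ab.2) + if ab.2 = ab.1 then D none else 0))
      = S10.st (S10.push NMExt pp) D := by
    intro pp D
    funext ab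
    unfold S10.st S10.push
    congr 1
    · apply Finset.sum_congr rfl
      intro z _
      exact S10.iteq _ _ _ _ Iff.rfl
    · congr 1
      exact S10.iteq _ _ _ _ Iff.rfl
  by_cases hε4 : (1:ℝ)/4 ≤ ε
  · -- trivial regime : everything is within distance 1 ≤ 4ε
    intro p q hp hq _ _
    have hpq := S10.prod_isDist p q hp hq
    constructor
    · refine le_trans (le_of_eq (S10.sd_congr ?_ rfl)) (le_trans (S10.sd_le_one _ _
        (S10.push_isDist NMExt (prodDist p q) hpq) (S10.unif_isDist m)) (by linarith))
      exact EP (prodDist p q)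
    · intro f1 f2
      refine ⟨S10.dnone, S10.dnone_isDist, ?_⟩
      refine le_trans (le_of_eq (S10.sd_congr ?_ ?_)) (le_trans (S10.sd_le_one _ _
        (S10.push_isDist (fun z => (NMExt z, NMExt (f1 z.1, f2 z.2))) (prodDist p q) hpq)
        (S10.st_isDist _ _ (S10.push_isDist NMExt (prodDist p q) hpq) S10.dnone_isDist))
        (by linarith))
      · exact EF (prodDist p q) (fun z => (f1 z.1, f2 z.2))
      · exact ES (prodDist p q) S10.dnone
  · push_neg at hε4
    have hεle1 : ε ≤ 1 := by linarith
    have h1ε : 1 ≤ 1/ε := by rw [le_div_iff₀ hε]; linarith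
    have hlogb : 0 ≤ Real.logb 2 (1/ε) :=
      Real.logb_nonneg (by norm_num) h1ε
    have hk1le : k₁ - Real.logb 2 (1/ε) ≤ k₁ := by linarith
    have hk2le : k₂ - Real.logb 2 (1/ε) ≤ k₂ := by linarith
    have hpow : ∀ k : ℝ, (2:ℝ)^(-k) * (1/ε) ≤ (2:ℝ)^(-(k - Real.logb 2 (1/ε))) := by
      intro k
      have e : (2:ℝ)^(-(k - Real.logb 2 (1/ε))) = (2:ℝ)^(-k) * (1/ε) := by
        rw [show -(k - Real.logb 2 (1/ε)) = -k + Real.logb 2 (1/ε) by ring,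
          Real.rpow_add (by norm_num : (0:ℝ) < 2),
          Real.rpow_logb (by norm_num) (by norm_num) (by positivity)]
      exact le_of_eq e.symm
    intro p q hp hq hk1 hk2
    have hk1' := S10.minEnt_mono p k₁ _ hk1 hk1le
    have hk2' := S10.minEnt_mono q k₂ _ hk2 hk2le
    constructor
    · exact le_trans (h p q hp hq hk1' hk2').1 (by linarith)
    · intro f1 f2
      by_cases hn : n = 0
      · subst hn
        have hf1 : ∀ x : Fin 0 → Bool, f1 x = x := fun x => funext fun i => i.elim0
        have hf2 : ∀ x : Fin 0 → Bool, f2 x = x := fun x => funext fun i => i.elim0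
        refine ⟨S10.dnone, S10.dnone_isDist, ?_⟩
        have target : sd (S10.push (fun z => (NMExt z, NMExt (f1 z.1, f2 z.2))) (prodDist p q))
            (S10.st (S10.push NMExt (prodDist p q)) S10.dnone) ≤ 4*ε := by
          have e : S10.push (fun z => (NMExt z, NMExt (f1 z.1, f2 z.2))) (prodDist p q)
              = S10.st (S10.push NMExt (prodDist p q)) S10.dnone :=
            S10.push_pair_id NMExt (fun z => (f1 z.1, f2 z.2)) (prodDist p q)
              (fun z _ => by show (f1 z.1, f2 z.2) = z; rw [hf1 z.1, hf2 z.2])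
          rw [e, S10.sd_self]
          linarith
        refine le_trans (le_of_eq (S10.sd_congr ?_ ?_)) target
        · exact EF (prodDist p q) (fun z => (f1 z.1, f2 z.2))
        · exact ES (prodDist p q) S10.dnone
      · have hnpos : 0 < n := Nat.pos_of_ne_zero hn
        obtain ⟨τ, hτ⟩ : ∃ τ : (Fin n → Bool) → (Fin n → Bool), ∀ v, τ v ≠ v := by
          refine ⟨fun v => Function.update v ⟨0, hnpos⟩ (!(v ⟨0, hnpos⟩)), ?_⟩
          intro v hv
          have h0 : Function.update v ⟨0, hnpos⟩ (!(v ⟨0, hnpos⟩)) ⟨0, hnpos⟩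
              = v ⟨0, hnpos⟩ := congrFun hv ⟨0, hnpos⟩
          rw [Function.update_self] at h0
          simp at h0
        obtain ⟨sX, wX, PX, cX, hwX0, hwX1, hmixX, hPdist, hPent, hmissX, hfullX⟩ :=
          S10.side f1 τ p hp k₁ (k₁ - Real.logb 2 (1/ε)) ε hε hε4 hk1 hk1le (hpow k₁)
        obtain ⟨sY, wY, QY, cY, hwY0, hwY1, hmixY, hQdist, hQent, hmissY, hfullY⟩ :=
          S10.side f2 τ q hq k₂ (k₂ - Real.logb 2 (1/ε)) ε hε hε4 hk2 hk2le (hpow k₂)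
        have hw1 : ∑ ij : Fin 2 × Fin 2, wX ij.1 * wY ij.2 = 1 := by
          rw [Fintype.sum_prod_type]
          calc ∑ i, ∑ j, wX ((i, j) : Fin 2 × Fin 2).1 * wY ((i, j) : Fin 2 × Fin 2).2
              = ∑ i, wX i * ∑ j, wY j := by
                apply Finset.sum_congr rfl
                intro i _
                calc ∑ j, wX ((i, j) : Fin 2 × Fin 2).1 * wY ((i, j) : Fin 2 × Fin 2).2
                    = ∑ j, wX i * wY j := Finset.sum_congr rfl fun j _ => rfl
                  _ = wX i * ∑ j, wY j := by rw [← Finset.mul_sum]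
            _ = 1 := by rw [hwY1]; simp only [mul_one]; exact hwX1
        have hmixP : ∀ z, prodDist p q z = ∑ ij : Fin 2 × Fin 2,
            (wX ij.1 * wY ij.2) * prodDist (PX ij.1) (QY ij.2) z := by
          intro z
          show p z.1 * q z.2 = _
          rw [hmixX z.1, hmixY z.2, Finset.sum_mul_sum, Fintype.sum_prod_type]
          apply Finset.sum_congr rfl
          intro i _
          apply Finset.sum_congr rfl
          intro j _
          show (wX i * PX i z.1) * (wY j * QY j z.2)
            = (wX i * wY j) * (PX i z.1 * QY j z.2)
          ring
        have hPpos : ∀ (ij : Fin 2 × Fin 2) z, 0 ≤ prodDist (PX ij.1) (QY ij.2) z :=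
          fun ij z => mul_nonneg ((hPdist _).1 _) ((hQdist _).1 _)
        have hNM : ∀ ij : Fin 2 × Fin 2, ∃ D, isDist D ∧
            sd (S10.push (fun z => (NMExt z,
                NMExt ((if cX ij.1 then S10.tamper f1 τ else id) z.1,
                  (if cY ij.2 then S10.tamper f2 τ else id) z.2)))
              (prodDist (PX ij.1) (QY ij.2)))
              (S10.st (S10.push NMExt (prodDist (PX ij.1) (QY ij.2))) D) ≤ ε := by
          intro ij
          obtain ⟨hone1, hone2, hboth⟩ :=
            (h (PX ij.1) (QY ij.2) (hPdist _) (hQdist _) (hPent _) (hQent _)).2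
              (S10.tamper f1 τ) (S10.tamper f2 τ)
              (S10.tamper_fpf f1 τ hτ) (S10.tamper_fpf f2 τ hτ)
          rcases Bool.eq_false_or_eq_true (cX ij.1) with hci | hci <;>
            rcases Bool.eq_false_or_eq_true (cY ij.2) with hcj | hcj <;>
            rw [hci, hcj]
          · -- tamper, tamper
            unfold NMFun at hboth
            obtain ⟨D, hD, hsd⟩ := hboth
            exact ⟨D, hD, le_trans (le_of_eq (S10.sd_congr (EF _ _).symm (ES _ _).symm)) hsd⟩
          · -- tamper, id
            unfold NMFun at hone1
            obtain ⟨D, hD, hsd⟩ := hone1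
            exact ⟨D, hD, le_trans (le_of_eq (S10.sd_congr (EF _ _).symm (ES _ _).symm)) hsd⟩
          · -- id, tamper
            unfold NMFun at hone2
            obtain ⟨D, hD, hsd⟩ := hone2
            exact ⟨D, hD, le_trans (le_of_eq (S10.sd_congr (EF _ _).symm (ES _ _).symm)) hsd⟩
          · -- id, id
            refine ⟨S10.dnone, S10.dnone_isDist, ?_⟩
            have e : S10.push (fun z => (NMExt z,
                NMExt ((if (false : Bool) then S10.tamper f1 τ else id) z.1,
                  (if (false : Bool) then S10.tamper f2 τ else id) z.2)))
                (prodDist (PX ij.1) (QY ij.2))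
                = S10.st (S10.push NMExt (prodDist (PX ij.1) (QY ij.2))) S10.dnone :=
              S10.push_pair_id NMExt _ _ (fun z _ => rfl)
            rw [e, S10.sd_self]
            linarith
        have hUfull : sd (S10.push NMExt (prodDist p q))
            (fun _ : Fin m → Bool => (1:ℝ)/2^m) ≤ ε := by
          refine le_trans (le_of_eq (S10.sd_congr ?_ rfl)) (h p q hp hq hk1' hk2').1
          exact (EP _).symm
        have hmar : ∀ ij : Fin 2 × Fin 2,
            sd (S10.push NMExt (prodDist (PX ij.1) (QY ij.2)))
              (S10.push NMExt (prodDist p q)) ≤ (if sX || sY then 2*ε else 0) := by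
          intro ij
          by_cases hss : sX = false ∧ sY = false
          · rw [hfullX hss.1 ij.1, hfullY hss.2 ij.2, hss.1, hss.2, S10.sd_self]
            norm_num
          · have hb : (sX || sY) = true := by
              rcases Bool.eq_false_or_eq_true sX with h1 | h1 <;>
                rcases Bool.eq_false_or_eq_true sY with h2 | h2
              · rw [h1, h2]; rfl
              · rw [h1, h2]; rfl
              · rw [h1, h2]; rfl
              · exact absurd ⟨h1, h2⟩ hss
            rw [hb]
            have hU : sd (S10.push NMExt (prodDist (PX ij.1) (QY ij.2)))
                (fun _ : Fin m → Bool => (1:ℝ)/2^m) ≤ ε := by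
              refine le_trans (le_of_eq (S10.sd_congr ?_ rfl))
                (h (PX ij.1) (QY ij.2) (hPdist _) (hQdist _) (hPent _) (hQent _)).1
              exact (EP _).symm
            calc sd (S10.push NMExt (prodDist (PX ij.1) (QY ij.2)))
                  (S10.push NMExt (prodDist p q))
                ≤ sd (S10.push NMExt (prodDist (PX ij.1) (QY ij.2)))
                    (fun _ : Fin m → Bool => (1:ℝ)/2^m)
                  + sd (fun _ : Fin m → Bool => (1:ℝ)/2^m)
                    (S10.push NMExt (prodDist p q)) := S10.sd_triangle _ _ _
              _ ≤ ε + ε := add_le_add hU (by rw [S10.sd_comm]; exact hUfull)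
              _ ≤ if (true : Bool) then 2*ε else 0 := by rw [if_pos rfl]; linarith
        have hmissP := S10.miss_assemble f1 f2
          (fun i => if cX i then S10.tamper f1 τ else id)
          (fun j => if cY j then S10.tamper f2 τ else id)
          wX PX wY QY (if sX then 0 else ε) (if sY then 0 else ε)
          hwX0 hwX1 hwY0 hwY1 hPdist hQdist hmissX hmissY
        obtain ⟨D, hD, hsd⟩ := S10.master NMExt (prodDist p q)
          (fun z => (f1 z.1, f2 z.2))
          (fun ij : Fin 2 × Fin 2 => wX ij.1 * wY ij.2)
          (fun ij => prodDist (PX ij.1) (QY ij.2))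
          (fun ij z => ((if cX ij.1 then S10.tamper f1 τ else id) z.1,
            (if cY ij.2 then S10.tamper f2 τ else id) z.2))
          ε (if sX || sY then 2*ε else 0) ((if sX then 0 else ε) + (if sY then 0 else ε))
          (fun ij => mul_nonneg (hwX0 _) (hwY0 _))
          hw1 hmixP hPpos hNM hmar
          (by
            refine le_trans (le_of_eq ?_) hmissP
            refine Finset.sum_congr rfl fun ij _ => ?_
            refine congrArg₂ (· * ·) rfl ?_
            refine Finset.sum_congr rfl fun z _ => ?_
            exact S10.iteq _ _ _ _ Iff.rfl)
        refine ⟨D, hD, ?_⟩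
        refine le_trans (le_of_eq (S10.sd_congr ?_ ?_)) (le_trans hsd ?_)
        · exact EF (prodDist p q) (fun z => (f1 z.1, f2 z.2))
        · exact ES (prodDist p q) D
        · rcases Bool.eq_false_or_eq_true sX with h1 | h1 <;>
            rcases Bool.eq_false_or_eq_true sY with h2 | h2 <;>
            rw [h1, h2] <;> norm_num <;> linarith
end

section
/- Let X be a distribution over {0,1}^n with min-entropy at least k, let f: {0,1}^n → {0,1}^n and g: {0,1}^n → {0,1}^d be arbitrary functions, and let NMExt: {0,1}^n → {0,1}^m be a uniformly random function. Then for any ε > 0, with probability at least 1 - 8·exp(2^{2m+d} - ε³·2^{k-6}) over the choice of NMExt, the following holds: defining Y = same if f(X)=X and Y = NMExt(f(X)) otherwise, and U uniform on {0,1}^m independent of everything else, the joint distribution (g(X), NMExt(X), NMExt(f(X))) is ε-close in statistical distance to (g(X), U, copy(Y, U)). -/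
open scoped Classical
open Finset
set_option linter.unusedSectionVars false

section Infra
variable {V : Type*} [Fintype V] [DecidableEq V] {K : Type*} [Fintype K] [Nonempty K]

noncomputable def Ex (φ : (V → K) → ℝ) : ℝ :=
  (∑ F : V → K, φ F) / (Fintype.card (V → K) : ℝ)

lemma cardΩ_pos : (0:ℝ) < (Fintype.card (V → K) : ℝ) := by exact_mod_cast Fintype.card_pos

lemma Ex_const (r : ℝ) : Ex (fun _ : V → K => r) = r := by
  unfold Ex
  rw [Finset.sum_const, card_univ, nsmul_eq_mul]
  have hc : (Fintype.card (V → K) : ℝ) ≠ 0 := ne_of_gt cardΩ_pos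
  field_simp

lemma Ex_mul_of_indep (s : Finset V) (φ ψ : (V → K) → ℝ)
    (hφ : ∀ F G, (∀ i ∈ s, F i = G i) → φ F = φ G)
    (hψ : ∀ F G, (∀ i ∉ s, F i = G i) → ψ F = ψ G) :
    Ex (fun F => φ F * ψ F) = Ex φ * Ex ψ := by
  have key : (∑ F : V → K, φ F) * (∑ F : V → K, ψ F)
      = (Fintype.card (V → K) : ℝ) * ∑ F : V → K, φ F * ψ F := by
    have h1 : (∑ F : V → K, φ F) * (∑ F : V → K, ψ F)
        = ∑ FG : (V → K) × (V → K), φ FG.1 * ψ FG.2 := by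
      rw [Fintype.sum_prod_type, Finset.sum_mul_sum]
    have hinv : Function.Involutive
        (fun FG : (V → K) × (V → K) => (s.piecewise FG.1 FG.2, s.piecewise FG.2 FG.1)) := by
      rintro ⟨F, G⟩
      ext i
      · by_cases hi : i ∈ s <;> simp [Finset.piecewise, hi]
      · by_cases hi : i ∈ s <;> simp [Finset.piecewise, hi]
    have h2 : ∑ FG : (V → K) × (V → K), φ FG.1 * ψ FG.2
        = ∑ FG : (V → K) × (V → K), φ FG.1 * ψ FG.1 := by
      rw [← Equiv.sum_comp hinv.toPerm
        (fun FG : (V → K) × (V → K) => φ FG.1 * ψ FG.2)]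
      apply Finset.sum_congr rfl
      rintro ⟨F, G⟩ -
      simp only [Function.Involutive.coe_toPerm]
      congr 1
      · apply hφ
        intro i hi
        simp [Finset.piecewise, hi]
      · apply hψ
        intro i hi
        simp [Finset.piecewise, hi]
    rw [h1, h2, Fintype.sum_prod_type]
    have h3 : ∀ F : V → K, ∑ _G : V → K, φ F * ψ F
        = (Fintype.card (V → K) : ℝ) * (φ F * ψ F) := by
      intro F
      rw [Finset.sum_const, card_univ, nsmul_eq_mul]
    rw [Finset.sum_congr rfl (fun F _ => h3 F), ← Finset.mul_sum]
  unfold Ex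
  have hc : (0:ℝ) < (Fintype.card (V → K) : ℝ) := cardΩ_pos
  have : (∑ F : V → K, φ F) / (Fintype.card (V → K) : ℝ)
      * ((∑ F : V → K, ψ F) / (Fintype.card (V → K) : ℝ))
      = ((∑ F : V → K, φ F) * (∑ F : V → K, ψ F))
        / ((Fintype.card (V → K) : ℝ) * (Fintype.card (V → K) : ℝ)) := by ring
  rw [this, key, mul_div_mul_left _ _ (ne_of_gt hc)]

lemma Ex_prod_of_indep {β : Type*} [DecidableEq β] (s : Finset β) (Vb : β → Finset V)
    (hdisj : ∀ a ∈ s, ∀ b ∈ s, a ≠ b → Disjoint (Vb a) (Vb b))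
    (φ : β → (V → K) → ℝ)
    (hdep : ∀ j ∈ s, ∀ F G, (∀ i ∈ Vb j, F i = G i) → φ j F = φ j G) :
    Ex (fun F => ∏ j ∈ s, φ j F) = ∏ j ∈ s, Ex (φ j) := by
  induction s using Finset.induction with
  | empty => simpa using Ex_const (V := V) (K := K) 1
  | @insert a t ha ih =>
    have step : Ex (fun F => φ a F * ∏ j ∈ t, φ j F)
        = Ex (φ a) * Ex (fun F => ∏ j ∈ t, φ j F) := by
      apply Ex_mul_of_indep (Vb a)
      · intro F G h
        exact hdep a (Finset.mem_insert_self a t) F G h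
      · intro F G h
        apply Finset.prod_congr rfl
        intro j hj
        apply hdep j (Finset.mem_insert_of_mem hj)
        intro i hi
        apply h
        intro hia
        have hdj := hdisj a (Finset.mem_insert_self a t) j (Finset.mem_insert_of_mem hj)
          (by rintro rfl; exact ha hj)
        exact (Finset.disjoint_left.1 hdj) hia hi
    have ih' := ih
      (fun x hx y hy hxy => hdisj x (Finset.mem_insert_of_mem hx) y (Finset.mem_insert_of_mem hy) hxy)
      (fun x hx => hdep x (Finset.mem_insert_of_mem hx))
    have hprod : (fun F => ∏ j ∈ insert a t, φ j F) = fun F => φ a F * ∏ j ∈ t, φ j F := by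
      funext F
      rw [Finset.prod_insert ha]
    rw [hprod, Finset.prod_insert ha, step, ih']

lemma sum_update_eq (z : V) (φ : (V → K) → ℝ) :
    ∑ v : K, ∑ F : V → K, φ (Function.update F z v)
      = (Fintype.card K : ℝ) * ∑ F : V → K, φ F := by
  have h1 : ∑ v : K, ∑ F : V → K, φ (Function.update F z v)
      = ∑ vF : K × (V → K), φ (Function.update vF.2 z vF.1) := by
    rw [Fintype.sum_prod_type]
  have hinv : Function.Involutive
      (fun vF : K × (V → K) => (vF.2 z, Function.update vF.2 z vF.1)) := by
    rintro ⟨v, F⟩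
    simp only [Function.update_self]
    ext
    · rfl
    · simp [Function.update_idem]
  have h2 : ∑ vF : K × (V → K), φ (Function.update vF.2 z vF.1)
      = ∑ vF : K × (V → K), φ vF.2 := by
    rw [← Equiv.sum_comp hinv.toPerm (fun vF : K × (V → K) => φ (Function.update vF.2 z vF.1))]
    apply Finset.sum_congr rfl
    rintro ⟨v, F⟩ -
    simp only [Function.Involutive.coe_toPerm]
    congr 1
    simp [Function.update_idem]
  rw [h1, h2, Fintype.sum_prod_type]
  simp [Finset.sum_const, card_univ]

lemma Ex_update_avg (z : V) (φ : (V → K) → ℝ) :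
    Ex φ = (∑ v : K, Ex (fun F => φ (Function.update F z v))) / (Fintype.card K : ℝ) := by
  unfold Ex
  rw [← Finset.sum_div, sum_update_eq z φ]
  have hK : (Fintype.card K : ℝ) ≠ 0 := by
    have : (0:ℝ) < (Fintype.card K : ℝ) := by exact_mod_cast Fintype.card_pos
    exact ne_of_gt this
  have hc : (Fintype.card (V → K) : ℝ) ≠ 0 := ne_of_gt cardΩ_pos
  field_simp

lemma Ex_of_dep_single (x : V) (ψ : (V → K) → ℝ) (F₀ : V → K)
    (hdep : ∀ F G : V → K, F x = G x → ψ F = ψ G) :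
    Ex ψ = (∑ v : K, ψ (Function.update F₀ x v)) / (Fintype.card K : ℝ) := by
  rw [Ex_update_avg x ψ]
  congr 1
  refine Finset.sum_congr rfl fun v _ => ?_
  have : ∀ F : V → K, ψ (Function.update F x v) = ψ (Function.update F₀ x v) := by
    intro F
    apply hdep
    simp
  rw [show (fun F : V → K => ψ (Function.update F x v))
      = (fun _ : V → K => ψ (Function.update F₀ x v)) from funext this]
  exact Ex_const _

lemma avg_exp_le {M μ : ℝ} (hM : 0 ≤ M) (t : K → ℝ) (h0 : ∑ v : K, t v = 0)
    (hb : ∀ v, |t v| ≤ M) (hμ : |μ| * M ≤ 1) :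
    ∑ v : K, Real.exp (μ * t v)
      ≤ (Fintype.card K : ℝ) * Real.exp ((3/4) * μ^2 * M^2) := by
  have hexp : ∀ x : ℝ, |x| ≤ 1 → Real.exp x ≤ 1 + x + (3/4) * x^2 := by
    intro x h
    have := Real.exp_bound h (n := 2) (by norm_num)
    have h2 : (∑ m ∈ Finset.range 2, x ^ m / m.factorial) = 1 + x := by
      simp [Finset.sum_range_succ]
    rw [h2] at this
    have h3 : ((2:ℕ).succ : ℝ) / ((2:ℕ).factorial * (2:ℕ)) = 3/4 := by
      norm_num [Nat.factorial]
    rw [h3] at this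
    have hx2 : |x|^2 = x^2 := sq_abs x
    nlinarith [abs_le.1 this]
  have step : ∀ v : K, Real.exp (μ * t v) ≤ 1 + μ * t v + (3/4) * μ^2 * (t v)^2 := by
    intro v
    have habs : |μ * t v| ≤ 1 := by
      rw [abs_mul]
      calc |μ| * |t v| ≤ |μ| * M := by
            apply mul_le_mul_of_nonneg_left (hb v) (abs_nonneg μ)
        _ ≤ 1 := hμ
    calc Real.exp (μ * t v) ≤ 1 + μ * t v + (3/4) * (μ * t v)^2 := hexp _ habs
      _ = 1 + μ * t v + (3/4) * μ^2 * (t v)^2 := by ring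
  calc ∑ v : K, Real.exp (μ * t v)
      ≤ ∑ v : K, (1 + μ * t v + (3/4) * μ^2 * (t v)^2) := Finset.sum_le_sum (fun v _ => step v)
    _ = (Fintype.card K : ℝ) + μ * (∑ v : K, t v) + (3/4) * μ^2 * ∑ v : K, (t v)^2 := by
        rw [Finset.sum_add_distrib, Finset.sum_add_distrib, ← Finset.mul_sum, ← Finset.mul_sum]
        simp [card_univ]
    _ ≤ (Fintype.card K : ℝ) + 0 + (3/4) * μ^2 * ((Fintype.card K : ℝ) * M^2) := by
        rw [h0, mul_zero]
        have : ∑ v : K, (t v)^2 ≤ (Fintype.card K : ℝ) * M^2 := by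
          calc ∑ v : K, (t v)^2 ≤ ∑ _v : K, M^2 := by
                apply Finset.sum_le_sum
                intro v _hv
                rw [← sq_abs (t v)]
                apply pow_le_pow_left₀ (abs_nonneg _) (hb v)
            _ = (Fintype.card K : ℝ) * M^2 := by
                rw [Finset.sum_const, card_univ, nsmul_eq_mul]
        have h34 : (0:ℝ) ≤ (3/4) * μ^2 := by positivity
        linarith [mul_le_mul_of_nonneg_left this h34]
    _ ≤ (Fintype.card K : ℝ) * Real.exp ((3/4) * μ^2 * M^2) := by
        have h1 : 1 + (3/4) * μ^2 * M^2 ≤ Real.exp ((3/4) * μ^2 * M^2) := by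
          have := Real.add_one_le_exp ((3/4) * μ^2 * M^2)
          linarith
        have hK : (0:ℝ) ≤ (Fintype.card K : ℝ) := by positivity
        calc (Fintype.card K : ℝ) + 0 + (3/4) * μ^2 * ((Fintype.card K : ℝ) * M^2)
            = (Fintype.card K : ℝ) * (1 + (3/4) * μ^2 * M^2) := by ring
          _ ≤ (Fintype.card K : ℝ) * Real.exp ((3/4) * μ^2 * M^2) :=
              mul_le_mul_of_nonneg_left h1 hK
end Infra
open scoped Classical
open Finset
set_option linter.unusedSectionVars false
set_option maxHeartbeats 1000000

section Block
variable {V : Type*} [Fintype V] [DecidableEq V] {K : Type*} [Fintype K] [Nonempty K]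

lemma Ex_nonneg {φ : (V → K) → ℝ} (h : ∀ F, 0 ≤ φ F) : 0 ≤ Ex φ := by
  unfold Ex
  apply div_nonneg (Finset.sum_nonneg fun F _ => h F) (le_of_lt cardΩ_pos)

lemma block_mgf (μ : ℝ) (z : V) (B : Finset V) (t : V → (V → K) → ℝ) (M : V → ℝ)
    (hdep : ∀ x ∈ B, ∀ F G : V → K, F x = G x → F z = G z → t x F = t x G)
    (hmean : ∀ x ∈ B, ∀ F : V → K, ∑ w : K, t x (Function.update F x w) = 0)
    (hbd : ∀ x ∈ B, ∀ F : V → K, |t x F| ≤ M x)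
    (hμ : ∀ x ∈ B, |μ| * M x ≤ 1) :
    Ex (fun F => Real.exp (μ * ∑ x ∈ B, t x F))
      ≤ Real.exp ((3/4) * μ^2 * ∑ x ∈ B, (M x)^2) := by
  classical
  have hM0 : ∀ x ∈ B, 0 ≤ M x := fun x hx =>
    le_trans (abs_nonneg _) (hbd x hx (Classical.arbitrary _))
  have hKpos : (0:ℝ) < (Fintype.card K : ℝ) := by exact_mod_cast Fintype.card_pos
  set F₀ : V → K := Classical.arbitrary _ with hF₀
  set bound : V → ℝ := fun x => Real.exp ((3/4) * μ^2 * (M x)^2) with hbound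
  have hbound0 : ∀ x, 0 ≤ bound x := fun x => le_of_lt (Real.exp_pos _)
  -- step B: factorization for each v
  have stepB : ∀ v : K,
      Ex (fun F => Real.exp (μ * ∑ x ∈ B, t x (Function.update F z v)))
        = ∏ x ∈ B, Ex (fun F => Real.exp (μ * t x (Function.update F z v))) := by
    intro v
    have hrw : (fun F : V → K => Real.exp (μ * ∑ x ∈ B, t x (Function.update F z v)))
        = fun F => ∏ x ∈ B, Real.exp (μ * t x (Function.update F z v)) := by
      funext F
      rw [Finset.mul_sum, Real.exp_sum]
    rw [hrw]
    apply Ex_prod_of_indep B (fun x => if x = z then (∅ : Finset V) else {x})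
    · intro a ha b hb hab
      by_cases haz : a = z
      · simp [haz]
      · by_cases hbz : b = z
        · simp [hbz]
        · simp only [if_neg haz, if_neg hbz]
          exact Finset.disjoint_singleton.2 hab
    · intro j hj F G hFG
      have hj1 : (Function.update F z v) j = (Function.update G z v) j := by
        by_cases hjz : j = z
        · subst hjz; simp
        · rw [Function.update_of_ne hjz, Function.update_of_ne hjz]
          exact hFG j (by simp [if_neg hjz])
      have hj2 : (Function.update F z v) z = (Function.update G z v) z := by simp
      rw [hdep j hj _ _ hj1 hj2]
  -- step C1: single factor bound for x ≠ z
  have stepC1 : ∀ v : K, ∀ x ∈ B, x ≠ z →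
      Ex (fun F => Real.exp (μ * t x (Function.update F z v))) ≤ bound x := by
    intro v x hx hxz
    have hval : Ex (fun F => Real.exp (μ * t x (Function.update F z v)))
        = (∑ w : K, Real.exp (μ * t x (Function.update (Function.update F₀ z v) x w)))
            / (Fintype.card K : ℝ) := by
      rw [Ex_of_dep_single x _ F₀ ?_]
      · congr 1
        refine Finset.sum_congr rfl fun w _ => ?_
        rw [Function.update_comm hxz]
      · intro F G hFGx
        have h1 : (Function.update F z v) x = (Function.update G z v) x := by
          rw [Function.update_of_ne hxz, Function.update_of_ne hxz]; exact hFGx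
        have h2 : (Function.update F z v) z = (Function.update G z v) z := by simp
        rw [hdep x hx _ _ h1 h2]
    rw [hval, div_le_iff₀ hKpos, hbound]
    calc ∑ w : K, Real.exp (μ * t x (Function.update (Function.update F₀ z v) x w))
        ≤ (Fintype.card K : ℝ) * Real.exp ((3/4) * μ^2 * (M x)^2) :=
          avg_exp_le (hM0 x hx) _ (hmean x hx _)
            (fun w => hbd x hx _) (hμ x hx)
      _ = Real.exp ((3/4) * μ^2 * (M x)^2) * (Fintype.card K : ℝ) := by ring
  -- step C2: x = z factor is constant
  have stepC2 : z ∈ B → ∀ v : K,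
      Ex (fun F => Real.exp (μ * t z (Function.update F z v)))
        = Real.exp (μ * t z (Function.update F₀ z v)) := by
    intro hzB v
    have : (fun F : V → K => Real.exp (μ * t z (Function.update F z v)))
        = fun _ => Real.exp (μ * t z (Function.update F₀ z v)) := by
      funext F
      have := hdep z hzB (Function.update F z v) (Function.update F₀ z v) (by simp) (by simp)
      rw [this]
    rw [this, Ex_const]
  -- step A
  have stepA : Ex (fun F => Real.exp (μ * ∑ x ∈ B, t x F))
      = (∑ v : K, Ex (fun F => Real.exp (μ * ∑ x ∈ B, t x (Function.update F z v))))
          / (Fintype.card K : ℝ) :=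
    Ex_update_avg z _
  have hfin : Real.exp ((3/4) * μ^2 * ∑ x ∈ B, (M x)^2) = ∏ x ∈ B, bound x := by
    rw [hbound, ← Real.exp_sum, Finset.mul_sum]
  rw [stepA, hfin]
  by_cases hzB : z ∈ B
  · -- z in B
    set C : ℝ := ∏ x ∈ B.erase z, bound x with hC
    have hC0 : 0 ≤ C := Finset.prod_nonneg fun x _ => hbound0 x
    have h1 : ∀ v : K,
        Ex (fun F => Real.exp (μ * ∑ x ∈ B, t x (Function.update F z v)))
          ≤ Real.exp (μ * t z (Function.update F₀ z v)) * C := by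
      intro v
      rw [stepB v, ← Finset.mul_prod_erase B _ hzB, stepC2 hzB v]
      apply mul_le_mul_of_nonneg_left _ (le_of_lt (Real.exp_pos _))
      apply Finset.prod_le_prod
      · intro x _
        exact Ex_nonneg fun F => le_of_lt (Real.exp_pos _)
      · intro x hx
        exact stepC1 v x (Finset.mem_of_mem_erase hx) (Finset.ne_of_mem_erase hx)
    calc (∑ v : K, Ex (fun F => Real.exp (μ * ∑ x ∈ B, t x (Function.update F z v))))
          / (Fintype.card K : ℝ)
        ≤ (∑ v : K, Real.exp (μ * t z (Function.update F₀ z v)) * C)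
          / (Fintype.card K : ℝ) := by
          exact (div_le_div_iff_of_pos_right hKpos).2 (Finset.sum_le_sum fun v _ => h1 v)
      _ ≤ (((Fintype.card K : ℝ) * bound z) * C) / (Fintype.card K : ℝ) := by
          apply (div_le_div_iff_of_pos_right hKpos).2
          rw [← Finset.sum_mul]
          apply mul_le_mul_of_nonneg_right _ hC0
          exact avg_exp_le (hM0 z hzB) _ (hmean z hzB F₀) (fun w => hbd z hzB _) (hμ z hzB)
      _ = ∏ x ∈ B, bound x := by
          rw [← Finset.mul_prod_erase B _ hzB, ← hC]
          field_simp
  · -- z not in B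
    have h1 : ∀ v : K,
        Ex (fun F => Real.exp (μ * ∑ x ∈ B, t x (Function.update F z v)))
          ≤ ∏ x ∈ B, bound x := by
      intro v
      rw [stepB v]
      apply Finset.prod_le_prod
      · intro x _
        exact Ex_nonneg fun F => le_of_lt (Real.exp_pos _)
      · intro x hx
        exact stepC1 v x hx (by rintro rfl; exact hzB hx)
    calc (∑ v : K, Ex (fun F => Real.exp (μ * ∑ x ∈ B, t x (Function.update F z v))))
          / (Fintype.card K : ℝ)
        ≤ (∑ _v : K, ∏ x ∈ B, bound x) / (Fintype.card K : ℝ) := by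
          exact (div_le_div_iff_of_pos_right hKpos).2 (Finset.sum_le_sum fun v _ => h1 v)
      _ = ∏ x ∈ B, bound x := by
          rw [Finset.sum_const, card_univ, nsmul_eq_mul]
          field_simp
end Block

section Coloring
variable {V : Type*} [Fintype V] [DecidableEq V]

lemma exists_coloring_aux (f : V → V) (s : Finset V) :
    ∃ c : V → Fin 3, ∀ z ∈ s, f z ∈ s → f z ≠ z → c z ≠ c (f z) := by
  classical
  induction s using Finset.strongInduction with
  | _ s ih =>
    rcases Finset.eq_empty_or_nonempty s with rfl | hne
    · exact ⟨fun _ => 0, by simp⟩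
    -- find a vertex with at most one inward neighbour
    have hsum : ∑ v ∈ s, (s.filter (fun u => u ≠ v ∧ f u = v)).card ≤ s.card := by
      rw [← Finset.card_biUnion]
      · apply Finset.card_le_card
        intro u hu
        rw [Finset.mem_biUnion] at hu
        obtain ⟨v, -, hu⟩ := hu
        exact Finset.mem_of_mem_filter u hu
      · intro a ha b hb hab
        apply Finset.disjoint_left.2
        intro u hu1 hu2
        rw [Finset.mem_filter] at hu1 hu2
        exact hab (hu1.2.2 ▸ hu2.2.2)
    have hv : ∃ v ∈ s, (s.filter (fun u => u ≠ v ∧ f u = v)).card ≤ 1 := by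
      by_contra h
      push_neg at h
      have : ∑ v ∈ s, (s.filter (fun u => u ≠ v ∧ f u = v)).card
          ≥ ∑ _v ∈ s, 2 := Finset.sum_le_sum (fun v hvs => h v hvs)
      rw [Finset.sum_const, smul_eq_mul] at this
      have hcard : 1 ≤ s.card := Finset.card_pos.2 hne
      omega
    obtain ⟨v, hvs, hvcard⟩ := hv
    obtain ⟨c, hc⟩ := ih (s.erase v) (Finset.erase_ssubset hvs)
    set forb : Finset (Fin 3) :=
      insert (c (f v)) ((s.filter (fun u => u ≠ v ∧ f u = v)).image c) with hforb
    have hforbcard : forb.card < 3 := by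
      calc forb.card ≤ ((s.filter (fun u => u ≠ v ∧ f u = v)).image c).card + 1 :=
            Finset.card_insert_le _ _
        _ ≤ (s.filter (fun u => u ≠ v ∧ f u = v)).card + 1 :=
            Nat.add_le_add_right (Finset.card_image_le) 1
        _ < 3 := by omega
    have hw : ∃ w : Fin 3, w ∉ forb := by
      by_contra h
      push_neg at h
      have : forb = Finset.univ := Finset.eq_univ_iff_forall.2 h
      rw [this, Finset.card_univ] at hforbcard
      simp at hforbcard
    obtain ⟨w, hwforb⟩ := hw
    refine ⟨Function.update c v w, ?_⟩
    intro z hz hfz hfzz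
    by_cases hzv : z = v
    · subst hzv
      rw [Function.update_self, Function.update_of_ne hfzz]
      intro heq
      exact hwforb (heq ▸ Finset.mem_insert_self _ _)
    · by_cases hfzv : f z = v
      · rw [Function.update_of_ne hzv, hfzv, Function.update_self]
        intro heq
        apply hwforb
        rw [hforb]
        apply Finset.mem_insert_of_mem
        exact Finset.mem_image.2 ⟨z, Finset.mem_filter.2 ⟨hz, hzv, hfzv⟩, heq⟩
      · rw [Function.update_of_ne hzv, Function.update_of_ne hfzv]
        exact hc z (Finset.mem_erase.2 ⟨hzv, hz⟩) (Finset.mem_erase.2 ⟨hfzv, hfz⟩) hfzz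

lemma exists_coloring (f : V → V) :
    ∃ c : V → Fin 3, ∀ z, f z ≠ z → c z ≠ c (f z) := by
  obtain ⟨c, hc⟩ := exists_coloring_aux f Finset.univ
  exact ⟨c, fun z h => hc z (Finset.mem_univ z) (Finset.mem_univ _) h⟩
end Coloring

section App
variable {n m d : ℕ}

/-- first joint distribution -/
noncomputable def DD1 (p : (Fin n → Bool) → ℝ) (f : (Fin n → Bool) → (Fin n → Bool))
    (g : (Fin n → Bool) → (Fin d → Bool)) (F : (Fin n → Bool) → (Fin m → Bool))
    (cab : (Fin d → Bool) × (Fin m → Bool) × (Fin m → Bool)) : ℝ :=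
  ∑ x, if g x = cab.1 ∧ F x = cab.2.1 ∧ F (f x) = cab.2.2 then p x else 0

/-- second (ideal) joint distribution -/
noncomputable def DD2 (p : (Fin n → Bool) → ℝ) (f : (Fin n → Bool) → (Fin n → Bool))
    (g : (Fin n → Bool) → (Fin d → Bool)) (F : (Fin n → Bool) → (Fin m → Bool))
    (cab : (Fin d → Bool) × (Fin m → Bool) × (Fin m → Bool)) : ℝ :=
  ∑ x, if g x = cab.1 then
    p x * (1 / 2 ^ m) *
      (if f x = x then (if cab.2.2 = cab.2.1 then (1:ℝ) else 0)
        else (if F (f x) = cab.2.2 then 1 else 0))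
    else 0

/-- per-point centered term -/
noncomputable def tt (p : (Fin n → Bool) → ℝ) (f : (Fin n → Bool) → (Fin n → Bool))
    (g : (Fin n → Bool) → (Fin d → Bool))
    (T : Finset ((Fin d → Bool) × (Fin m → Bool) × (Fin m → Bool)))
    (x : Fin n → Bool) (F : (Fin n → Bool) → (Fin m → Bool)) : ℝ :=
  p x * ((if (g x, F x, F (f x)) ∈ T then (1:ℝ) else 0)
    - (1 / 2 ^ m) * ((Finset.univ.filter
        (fun a : Fin m → Bool => (g x, a, if f x = x then a else F (f x)) ∈ T)).card : ℝ))

variable (p : (Fin n → Bool) → ℝ) (f : (Fin n → Bool) → (Fin n → Bool))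
  (g : (Fin n → Bool) → (Fin d → Bool))

lemma L1 (T : Finset ((Fin d → Bool) × (Fin m → Bool) × (Fin m → Bool)))
    (F : (Fin n → Bool) → (Fin m → Bool)) :
    ∑ cab ∈ T, (DD1 p f g F cab - DD2 p f g F cab) = ∑ x, tt p f g T x F := by
  rw [Finset.sum_sub_distrib]
  unfold DD1 DD2 tt
  rw [Finset.sum_comm, Finset.sum_comm (s := T)]
  rw [← Finset.sum_sub_distrib]
  apply Finset.sum_congr rfl
  intro x _
  have h1 : ∑ cab ∈ T, (if g x = cab.1 ∧ F x = cab.2.1 ∧ F (f x) = cab.2.2 then p x else 0)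
      = (if (g x, F x, F (f x)) ∈ T then p x else 0) := by
    rw [← Finset.sum_ite_eq T ((g x, F x, F (f x)) : (Fin d → Bool) × (Fin m → Bool) × (Fin m → Bool)) (fun _ => p x)]
    apply Finset.sum_congr rfl
    intro cab _
    obtain ⟨c, a, b⟩ := cab
    exact if_congr (by simp [Prod.mk.injEq]) rfl rfl
  have h2 : ∑ cab ∈ T, (if g x = cab.1 then
        p x * (1 / 2 ^ m) *
          (if f x = x then (if cab.2.2 = cab.2.1 then (1:ℝ) else 0)
            else (if F (f x) = cab.2.2 then 1 else 0))
        else 0)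
      = p x * ((1 / 2 ^ m) * ((Finset.univ.filter
          (fun a : Fin m → Bool => (g x, a, if f x = x then a else F (f x)) ∈ T)).card : ℝ)) := by
    have hrw : ∀ cab ∈ T, (if g x = cab.1 then
        p x * (1 / 2 ^ m) *
          (if f x = x then (if cab.2.2 = cab.2.1 then (1:ℝ) else 0)
            else (if F (f x) = cab.2.2 then 1 else 0))
        else 0)
        = (if (g x = cab.1 ∧ (if f x = x then cab.2.2 = cab.2.1 else F (f x) = cab.2.2))
            then p x * (1 / 2 ^ m) else 0) := by
      intro cab _
      by_cases h1 : g x = cab.1 <;> by_cases h2 : f x = x <;>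
        by_cases h3 : cab.2.2 = cab.2.1 <;> by_cases h4 : F (f x) = cab.2.2 <;>
        simp [h1, h2, h3, h4]
    rw [Finset.sum_congr rfl hrw, Finset.sum_ite, Finset.sum_const, Finset.sum_const_zero,
      add_zero, nsmul_eq_mul]
    have hcard : (T.filter (fun cab => g x = cab.1 ∧
          (if f x = x then cab.2.2 = cab.2.1 else F (f x) = cab.2.2))).card
        = (Finset.univ.filter
          (fun a : Fin m → Bool => (g x, a, if f x = x then a else F (f x)) ∈ T)).card := by
      apply Finset.card_bij' (fun cab _ => cab.2.1)
        (fun a _ => ((g x, a, if f x = x then a else F (f x)) :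
          (Fin d → Bool) × (Fin m → Bool) × (Fin m → Bool)))
      · rintro ⟨c₁, a₁, b₁⟩ hcab
        rw [Finset.mem_filter] at hcab
        obtain ⟨hT, hc, hcond⟩ := hcab
        rw [Finset.mem_filter]
        refine ⟨Finset.mem_univ _, ?_⟩
        have heq : ((g x, a₁, if f x = x then a₁ else F (f x)) :
            (Fin d → Bool) × (Fin m → Bool) × (Fin m → Bool)) = (c₁, a₁, b₁) := by
          by_cases h2 : f x = x
          · rw [if_pos h2] at hcond ⊢
            simp only [Prod.mk.injEq]
            exact ⟨hc, trivial, hcond.symm⟩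
          · rw [if_neg h2] at hcond ⊢
            simp only [Prod.mk.injEq]
            exact ⟨hc, trivial, hcond⟩
        exact heq ▸ hT
      · intro a ha
        rw [Finset.mem_filter] at ha
        rw [Finset.mem_filter]
        refine ⟨ha.2, rfl, ?_⟩
        by_cases h2 : f x = x <;> simp [h2]
      · rintro ⟨c₁, a₁, b₁⟩ hcab
        rw [Finset.mem_filter] at hcab
        obtain ⟨hT, hc, hcond⟩ := hcab
        by_cases h2 : f x = x
        · rw [if_pos h2] at hcond ⊢
          simp only [Prod.mk.injEq]
          exact ⟨hc, trivial, hcond.symm⟩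
        · rw [if_neg h2] at hcond ⊢
          simp only [Prod.mk.injEq]
          exact ⟨hc, trivial, hcond⟩
      · intro a ha
        rfl
    rw [hcard]
    ring
  rw [h1, h2]
  by_cases hT : (g x, F x, F (f x)) ∈ T <;> simp [hT] <;> try ring

lemma L2 (T : Finset ((Fin d → Bool) × (Fin m → Bool) × (Fin m → Bool)))
    (x : Fin n → Bool) (F : (Fin n → Bool) → (Fin m → Bool)) :
    ∑ w : Fin m → Bool, tt p f g T x (Function.update F x w) = 0 := by
  have h2m : ((2:ℝ) ^ m) ≠ 0 := by positivity
  have hcardK : (Fintype.card (Fin m → Bool) : ℝ) = 2 ^ m := by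
    simp [Fintype.card_fun]
  by_cases hfx : f x = x
  · have hterm : ∀ w : Fin m → Bool,
        tt p f g T x (Function.update F x w)
          = p x * ((if (g x, w, w) ∈ T then (1:ℝ) else 0)
            - (1 / 2 ^ m) * ((Finset.univ.filter
                (fun a : Fin m → Bool => (g x, a, a) ∈ T)).card : ℝ)) := by
      intro w
      unfold tt
      have e1 : (Function.update F x w) x = w := by simp
      have e2 : (Function.update F x w) (f x) = w := by rw [hfx]; simp
      rw [e1, e2]
      simp only [if_pos hfx]
    rw [Finset.sum_congr rfl (fun w _ => hterm w), ← Finset.mul_sum,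
      Finset.sum_sub_distrib, Finset.sum_boole, Finset.sum_const, Finset.card_univ,
      nsmul_eq_mul, hcardK]
    field_simp
    ring
  · have hterm : ∀ w : Fin m → Bool,
        tt p f g T x (Function.update F x w)
          = p x * ((if (g x, w, F (f x)) ∈ T then (1:ℝ) else 0)
            - (1 / 2 ^ m) * ((Finset.univ.filter
                (fun a : Fin m → Bool => (g x, a, F (f x)) ∈ T)).card : ℝ)) := by
      intro w
      unfold tt
      have e1 : (Function.update F x w) x = w := by simp
      have e2 : (Function.update F x w) (f x) = F (f x) := Function.update_of_ne hfx w F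
      rw [e1]
      simp only [if_neg hfx, e2]
    rw [Finset.sum_congr rfl (fun w _ => hterm w), ← Finset.mul_sum,
      Finset.sum_sub_distrib, Finset.sum_boole, Finset.sum_const, Finset.card_univ,
      nsmul_eq_mul, hcardK]
    field_simp
    ring

lemma L3 (hp0 : ∀ x, 0 ≤ p x)
    (T : Finset ((Fin d → Bool) × (Fin m → Bool) × (Fin m → Bool)))
    (x : Fin n → Bool) (F : (Fin n → Bool) → (Fin m → Bool)) :
    |tt p f g T x F| ≤ p x := by
  unfold tt
  rw [abs_mul, abs_of_nonneg (hp0 x)]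
  have h2m : (0:ℝ) < 2 ^ m := by positivity
  set A : ℝ := (if (g x, F x, F (f x)) ∈ T then (1:ℝ) else 0) with hA
  set cN : ℕ := (Finset.univ.filter
      (fun a : Fin m → Bool => (g x, a, if f x = x then a else F (f x)) ∈ T)).card with hcN
  have hA0 : 0 ≤ A := by rw [hA]; split <;> norm_num
  have hA1 : A ≤ 1 := by rw [hA]; split <;> norm_num
  have hc0 : (0:ℝ) ≤ (cN : ℝ) := by positivity
  have hc1 : (cN : ℝ) ≤ 2 ^ m := by
    have : cN ≤ Fintype.card (Fin m → Bool) := by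
      rw [hcN, ← Finset.card_univ]
      exact Finset.card_filter_le _ _
    have h2 : Fintype.card (Fin m → Bool) = 2 ^ m := by simp [Fintype.card_fun]
    calc (cN : ℝ) ≤ (Fintype.card (Fin m → Bool) : ℝ) := by exact_mod_cast this
      _ = 2 ^ m := by exact_mod_cast h2
  have hB : 0 ≤ (1 / 2 ^ m : ℝ) * (cN : ℝ) ∧ (1 / 2 ^ m : ℝ) * (cN : ℝ) ≤ 1 := by
    constructor
    · exact mul_nonneg (by positivity) hc0
    · rw [div_mul_eq_mul_div, one_mul, div_le_one h2m]
      exact hc1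
  have habs : |A - (1 / 2 ^ m : ℝ) * (cN : ℝ)| ≤ 1 := by
    rw [abs_le]
    constructor <;> [linarith [hB.2]; linarith [hB.1]]
  calc p x * |A - (1 / 2 ^ m : ℝ) * (cN : ℝ)| ≤ p x * 1 :=
        mul_le_mul_of_nonneg_left habs (hp0 x)
    _ = p x := mul_one _

lemma L4 (T : Finset ((Fin d → Bool) × (Fin m → Bool) × (Fin m → Bool)))
    (x : Fin n → Bool) (F G : (Fin n → Bool) → (Fin m → Bool))
    (h1 : F x = G x) (h2 : F (f x) = G (f x)) :
    tt p f g T x F = tt p f g T x G := by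
  unfold tt
  simp only [h1, h2]
end App

section PerTest
variable {n m d : ℕ}

noncomputable def fiber (f : (Fin n → Bool) → (Fin n → Bool)) (z : Fin n → Bool) :
    Finset (Fin n → Bool) := Finset.univ.filter (fun x => f x = z)

noncomputable def Yb (p : (Fin n → Bool) → ℝ) (f : (Fin n → Bool) → (Fin n → Bool))
    (g : (Fin n → Bool) → (Fin d → Bool))
    (T : Finset ((Fin d → Bool) × (Fin m → Bool) × (Fin m → Bool)))
    (z : Fin n → Bool) (F : (Fin n → Bool) → (Fin m → Bool)) : ℝ :=
  ∑ x ∈ fiber f z, tt p f g T x F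

lemma class_mgf (p : (Fin n → Bool) → ℝ) (f : (Fin n → Bool) → (Fin n → Bool))
    (g : (Fin n → Bool) → (Fin d → Bool)) (hp0 : ∀ x, 0 ≤ p x)
    (T : Finset ((Fin d → Bool) × (Fin m → Bool) × (Fin m → Bool)))
    (color : (Fin n → Bool) → Fin 3)
    (hcolor : ∀ z, f z ≠ z → color z ≠ color (f z))
    (i : Fin 3) (μ : ℝ) (hμ1 : ∀ x, |μ| * p x ≤ 1) :
    Ex (fun F => Real.exp (μ * ∑ z ∈ Finset.univ.filter (fun z => color z = i), Yb p f g T z F))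
      ≤ Real.exp ((3/4) * μ^2 *
          ∑ z ∈ Finset.univ.filter (fun z => color z = i), ∑ x ∈ fiber f z, (p x)^2) := by
  classical
  set cls := Finset.univ.filter (fun z => color z = i) with hcls
  have hrw : (fun F : (Fin n → Bool) → (Fin m → Bool) =>
      Real.exp (μ * ∑ z ∈ cls, Yb p f g T z F))
      = fun F => ∏ z ∈ cls, Real.exp (μ * Yb p f g T z F) := by
    funext F
    rw [Finset.mul_sum, Real.exp_sum]
  rw [hrw]
  have hdisj : ∀ a ∈ cls, ∀ b ∈ cls, a ≠ b →
      Disjoint (insert a (fiber f a)) (insert b (fiber f b)) := by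
    intro a ha b hb hab
    rw [Finset.mem_filter] at ha hb
    rw [Finset.disjoint_left]
    intro u hu1 hu2
    rw [Finset.mem_insert] at hu1 hu2
    have h1 : u = a ∨ f u = a := by
      rcases hu1 with h | h
      · exact Or.inl h
      · exact Or.inr (Finset.mem_filter.1 h).2
    have h2 : u = b ∨ f u = b := by
      rcases hu2 with h | h
      · exact Or.inl h
      · exact Or.inr (Finset.mem_filter.1 h).2
    rcases h1 with rfl | hfa
    · rcases h2 with rfl | hfb
      · exact hab rfl
      · -- f u = b, u = a : f a = b, f a ≠ a
        have hne : f u ≠ u := by rw [hfb]; exact fun h => hab h.symm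
        exact (hcolor u hne) (by rw [hfb, ha.2, hb.2])
    · rcases h2 with rfl | hfb
      · have hne : f u ≠ u := by rw [hfa]; exact hab
        exact (hcolor u hne) (by rw [hfa, ha.2, hb.2])
      · exact hab (hfa ▸ hfb ▸ rfl)
  rw [Ex_prod_of_indep cls (fun z => insert z (fiber f z)) hdisj
    (fun z F => Real.exp (μ * Yb p f g T z F)) ?_]
  · calc ∏ z ∈ cls, Ex (fun F => Real.exp (μ * Yb p f g T z F))
        ≤ ∏ z ∈ cls, Real.exp ((3/4) * μ^2 * ∑ x ∈ fiber f z, (p x)^2) := by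
          apply Finset.prod_le_prod
          · intro z _
            exact Ex_nonneg (fun F => le_of_lt (Real.exp_pos _))
          · intro z _
            apply block_mgf μ z (fiber f z) (tt p f g T) p
            · intro x hx F G h1 h2
              have hfx : f x = z := (Finset.mem_filter.1 hx).2
              exact L4 p f g T x F G h1 (by rw [hfx]; exact h2)
            · intro x _ F
              exact L2 p f g T x F
            · intro x _ F
              exact L3 p f g hp0 T x F
            · intro x _
              exact hμ1 x
      _ = Real.exp ((3/4) * μ^2 * ∑ z ∈ cls, ∑ x ∈ fiber f z, (p x)^2) := by
          rw [← Real.exp_sum, Finset.mul_sum]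
  · intro z _ F G hFG
    have h1 : Yb p f g T z F = Yb p f g T z G := by
      unfold Yb
      apply Finset.sum_congr rfl
      intro x hx
      have hfx : f x = z := (Finset.mem_filter.1 hx).2
      apply L4 p f g T x F G
      · exact hFG x (Finset.mem_insert_of_mem hx)
      · rw [hfx]
        exact hFG z (Finset.mem_insert_self _ _)
    simp only [h1]
end PerTest

section PerTest2
variable {n m d : ℕ}

lemma exp_sq (a : ℝ) : (Real.exp a)^2 = Real.exp (2 * a) := by
  rw [sq, ← Real.exp_add]; ring_nf

lemma per_test (p : (Fin n → Bool) → ℝ) (f : (Fin n → Bool) → (Fin n → Bool))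
    (g : (Fin n → Bool) → (Fin d → Bool)) (k ε : ℝ)
    (hp0 : ∀ x, 0 ≤ p x) (hp1 : ∑ x, p x = 1)
    (hk : ∀ x, p x ≤ (2:ℝ) ^ (-k)) (hε : 0 < ε) (hε1 : ε ≤ 1)
    (T : Finset ((Fin d → Bool) × (Fin m → Bool) × (Fin m → Bool))) :
    ((Finset.univ.filter (fun F : (Fin n → Bool) → (Fin m → Bool) =>
        ε < ∑ x, tt p f g T x F)).card : ℝ)
      ≤ (Fintype.card ((Fin n → Bool) → (Fin m → Bool)) : ℝ)
          * Real.exp (-(ε ^ 3 * (2:ℝ) ^ (k - 6))) := by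
  classical
  obtain ⟨color, hcolor⟩ := exists_coloring f
  set R : ℝ := (2:ℝ) ^ (k : ℝ) with hR
  have hRpos : 0 < R := Real.rpow_pos_of_pos (by norm_num) k
  have hRinv : (2:ℝ) ^ (-k) = R⁻¹ := by
    rw [hR, ← Real.rpow_neg (by norm_num)]
  set lam : ℝ := ε * R / 8 with hlam
  have hlampos : 0 < lam := by positivity
  set S : ℝ := ∑ x, (p x)^2 with hS
  have hS0 : 0 ≤ S := Finset.sum_nonneg (fun x _ => sq_nonneg _)
  have hSle : S ≤ R⁻¹ := by
    rw [hS]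
    calc ∑ x, (p x)^2 ≤ ∑ x, p x * R⁻¹ := by
          apply Finset.sum_le_sum
          intro x _
          rw [sq]
          exact mul_le_mul_of_nonneg_left (hRinv ▸ hk x) (hp0 x)
      _ = R⁻¹ := by rw [← Finset.sum_mul, hp1, one_mul]
  -- the three classes
  set cls : Fin 3 → Finset (Fin n → Bool) :=
    fun i => Finset.univ.filter (fun z => color z = i) with hcls
  set Di : Fin 3 → ((Fin n → Bool) → (Fin m → Bool)) → ℝ :=
    fun i F => ∑ z ∈ cls i, Yb p f g T z F with hDi
  set Si : Fin 3 → ℝ := fun i => ∑ z ∈ cls i, ∑ x ∈ fiber f z, (p x)^2 with hSi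
  have hSi0 : ∀ i, 0 ≤ Si i := fun i =>
    Finset.sum_nonneg fun z _ => Finset.sum_nonneg fun x _ => sq_nonneg _
  have hSisum : Si 0 + Si 1 + Si 2 = S := by
    have h1 : ∑ i : Fin 3, Si i = ∑ z, ∑ x ∈ fiber f z, (p x)^2 := by
      rw [hSi]
      exact Finset.sum_fiberwise Finset.univ color _
    have h2 : ∑ z, ∑ x ∈ fiber f z, (p x)^2 = S := by
      rw [hS]
      exact Finset.sum_fiberwise Finset.univ f _
    rw [← Fin.sum_univ_three (fun i => Si i), h1, h2]
  have hsplit : ∀ F, (∑ x, tt p f g T x F) = Di 0 F + Di 1 F + Di 2 F := by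
    intro F
    have h1 : ∑ z, Yb p f g T z F = ∑ x, tt p f g T x F :=
      Finset.sum_fiberwise Finset.univ f _
    have h2 : ∑ i : Fin 3, Di i F = ∑ z, Yb p f g T z F := by
      rw [hDi]
      exact Finset.sum_fiberwise Finset.univ color _
    rw [← h1, ← h2, Fin.sum_univ_three (fun i => Di i F)]
  -- class mgf bounds
  have hmgf : ∀ (i : Fin 3) (μ : ℝ), (∀ x, |μ| * p x ≤ 1) →
      (∑ F : (Fin n → Bool) → (Fin m → Bool), Real.exp (μ * Di i F))
        ≤ (Fintype.card ((Fin n → Bool) → (Fin m → Bool)) : ℝ)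
            * Real.exp ((3/4) * μ^2 * Si i) := by
    intro i μ hμ1
    have := class_mgf p f g hp0 T color hcolor i μ hμ1
    unfold Ex at this
    rw [div_le_iff₀ cardΩ_pos] at this
    calc (∑ F : (Fin n → Bool) → (Fin m → Bool), Real.exp (μ * Di i F))
        ≤ Real.exp ((3/4) * μ^2 * Si i)
          * (Fintype.card ((Fin n → Bool) → (Fin m → Bool)) : ℝ) := this
      _ = _ := by ring
  have hmub : ∀ (c : ℝ), 0 ≤ c → c ≤ 4 → ∀ x, |c * lam| * p x ≤ 1 := by
    intro c hc0 hc4 x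
    have h1 : |c * lam| = c * lam := abs_of_nonneg (by positivity)
    rw [h1]
    calc c * lam * p x ≤ 4 * lam * R⁻¹ := by
          apply mul_le_mul (mul_le_mul_of_nonneg_right hc4 hlampos.le)
            (hRinv ▸ hk x) (hp0 x) (by positivity)
      _ = ε / 2 := by
          rw [hlam]
          field_simp
          ring
      _ ≤ 1 := by linarith
  -- Hölder 2-4-4 via Cauchy-Schwarz twice
  set A : ℝ := ∑ F : (Fin n → Bool) → (Fin m → Bool),
      Real.exp (lam * ∑ x, tt p f g T x F) with hA
  have hA0 : 0 ≤ A := Finset.sum_nonneg fun F _ => (Real.exp_pos _).le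
  set E0 : ℝ := ∑ F : (Fin n → Bool) → (Fin m → Bool), Real.exp (2 * lam * Di 0 F) with hE0
  set E1 : ℝ := ∑ F : (Fin n → Bool) → (Fin m → Bool), Real.exp (4 * lam * Di 1 F) with hE1
  set E2 : ℝ := ∑ F : (Fin n → Bool) → (Fin m → Bool), Real.exp (4 * lam * Di 2 F) with hE2
  set B : ℝ := ∑ F : (Fin n → Bool) → (Fin m → Bool),
      Real.exp (2 * lam * Di 1 F) * Real.exp (2 * lam * Di 2 F) with hB
  have hB0 : 0 ≤ B := Finset.sum_nonneg fun F _ => by positivity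
  have step1 : A^2 ≤ E0 * B := by
    have hA' : A = ∑ F : (Fin n → Bool) → (Fin m → Bool),
        Real.exp (lam * Di 0 F) * (Real.exp (lam * Di 1 F) * Real.exp (lam * Di 2 F)) := by
      rw [hA]
      apply Finset.sum_congr rfl
      intro F _
      rw [hsplit F, ← Real.exp_add, ← Real.exp_add]
      ring_nf
    have hcs := Finset.sum_mul_sq_le_sq_mul_sq Finset.univ
      (fun F : (Fin n → Bool) → (Fin m → Bool) => Real.exp (lam * Di 0 F))
      (fun F => Real.exp (lam * Di 1 F) * Real.exp (lam * Di 2 F))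
    rw [← hA'] at hcs
    calc A^2 ≤ (∑ F : (Fin n → Bool) → (Fin m → Bool), Real.exp (lam * Di 0 F)^2)
        * ∑ F : (Fin n → Bool) → (Fin m → Bool),
            (Real.exp (lam * Di 1 F) * Real.exp (lam * Di 2 F))^2 := hcs
      _ = E0 * B := by
          congr 1
          · rw [hE0]
            apply Finset.sum_congr rfl
            intro F _
            rw [exp_sq]
            ring_nf
          · rw [hB]
            apply Finset.sum_congr rfl
            intro F _
            rw [mul_pow, exp_sq, exp_sq]
            ring_nf
  have step2 : B^2 ≤ E1 * E2 := by
    have hcs := Finset.sum_mul_sq_le_sq_mul_sq Finset.univ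
      (fun F : (Fin n → Bool) → (Fin m → Bool) => Real.exp (2 * lam * Di 1 F))
      (fun F => Real.exp (2 * lam * Di 2 F))
    rw [← hB] at hcs
    calc B^2 ≤ (∑ F : (Fin n → Bool) → (Fin m → Bool), Real.exp (2 * lam * Di 1 F)^2)
        * ∑ F : (Fin n → Bool) → (Fin m → Bool), Real.exp (2 * lam * Di 2 F)^2 := hcs
      _ = E1 * E2 := by
          congr 1
          · rw [hE1]
            apply Finset.sum_congr rfl
            intro F _
            rw [exp_sq]
            ring_nf
          · rw [hE2]
            apply Finset.sum_congr rfl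
            intro F _
            rw [exp_sq]
            ring_nf
  set cΩ : ℝ := (Fintype.card ((Fin n → Bool) → (Fin m → Bool)) : ℝ) with hcΩ
  have hcΩ0 : 0 < cΩ := cardΩ_pos
  have hE0le : E0 ≤ cΩ * Real.exp (3 * lam^2 * Si 0) := by
    have := hmgf 0 (2 * lam) (hmub 2 (by norm_num) (by norm_num))
    calc E0 ≤ cΩ * Real.exp ((3/4) * (2*lam)^2 * Si 0) := this
      _ = cΩ * Real.exp (3 * lam^2 * Si 0) := by ring_nf
  have hE1le : E1 ≤ cΩ * Real.exp (12 * lam^2 * Si 1) := by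
    have := hmgf 1 (4 * lam) (hmub 4 (by norm_num) (by norm_num))
    calc E1 ≤ cΩ * Real.exp ((3/4) * (4*lam)^2 * Si 1) := this
      _ = cΩ * Real.exp (12 * lam^2 * Si 1) := by ring_nf
  have hE2le : E2 ≤ cΩ * Real.exp (12 * lam^2 * Si 2) := by
    have := hmgf 2 (4 * lam) (hmub 4 (by norm_num) (by norm_num))
    calc E2 ≤ cΩ * Real.exp ((3/4) * (4*lam)^2 * Si 2) := this
      _ = cΩ * Real.exp (12 * lam^2 * Si 2) := by ring_nf
  have hAle : A ≤ cΩ * Real.exp (3 * lam^2 * S) := by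
    have hpow : A^4 ≤ (cΩ * Real.exp (3 * lam^2 * S))^4 := by
      have hE00 : 0 ≤ E0 := Finset.sum_nonneg fun F _ => (Real.exp_pos _).le
      have hE10 : 0 ≤ E1 := Finset.sum_nonneg fun F _ => (Real.exp_pos _).le
      have h4 : A^4 ≤ E0^2 * (E1 * E2) := by
        calc A^4 = (A^2)^2 := by ring
          _ ≤ (E0 * B)^2 := by
              apply pow_le_pow_left₀ (sq_nonneg A) step1
          _ = E0^2 * B^2 := by ring
          _ ≤ E0^2 * (E1 * E2) := by
              apply mul_le_mul_of_nonneg_left step2 (sq_nonneg E0)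
      have h5 : E0^2 * (E1 * E2)
          ≤ (cΩ * Real.exp (3 * lam^2 * Si 0))^2
            * ((cΩ * Real.exp (12 * lam^2 * Si 1)) * (cΩ * Real.exp (12 * lam^2 * Si 2))) := by
        apply mul_le_mul
        · exact pow_le_pow_left₀ hE00 hE0le 2
        · apply mul_le_mul hE1le hE2le (Finset.sum_nonneg fun F _ => (Real.exp_pos _).le)
            (by positivity)
        · exact mul_nonneg hE10 (Finset.sum_nonneg fun F _ => (Real.exp_pos _).le)
        · positivity
      have h6 : (cΩ * Real.exp (3 * lam^2 * Si 0))^2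
            * ((cΩ * Real.exp (12 * lam^2 * Si 1)) * (cΩ * Real.exp (12 * lam^2 * Si 2)))
          = cΩ^4 * Real.exp (6 * lam^2 * Si 0 + 12 * lam^2 * Si 1 + 12 * lam^2 * Si 2) := by
        rw [Real.exp_add, Real.exp_add, mul_pow, exp_sq]
        ring_nf
      have h7 : 6 * lam^2 * Si 0 + 12 * lam^2 * Si 1 + 12 * lam^2 * Si 2
          ≤ 12 * lam^2 * S := by
        rw [← hSisum]
        nlinarith [hSi0 0, sq_nonneg lam]
      have h8 : (cΩ * Real.exp (3 * lam^2 * S))^4 = cΩ^4 * Real.exp (12 * lam^2 * S) := by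
        have he : (Real.exp (3 * lam^2 * S))^4 = Real.exp (12 * lam^2 * S) := by
          rw [← Real.exp_nat_mul]
          congr 1
          push_cast
          ring
        rw [mul_pow, he]
      calc A^4 ≤ E0^2 * (E1 * E2) := h4
        _ ≤ _ := h5
        _ = cΩ^4 * Real.exp (6 * lam^2 * Si 0 + 12 * lam^2 * Si 1 + 12 * lam^2 * Si 2) := h6
        _ ≤ cΩ^4 * Real.exp (12 * lam^2 * S) := by
            apply mul_le_mul_of_nonneg_left (Real.exp_le_exp.2 h7) (by positivity)
        _ = (cΩ * Real.exp (3 * lam^2 * S))^4 := h8.symm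
    exact le_of_pow_le_pow_left₀ (by norm_num) (by positivity) hpow
  -- Chernoff
  set bad := Finset.univ.filter (fun F : (Fin n → Bool) → (Fin m → Bool) =>
      ε < ∑ x, tt p f g T x F) with hbad
  have hcount : (bad.card : ℝ) * Real.exp (lam * ε) ≤ A := by
    calc (bad.card : ℝ) * Real.exp (lam * ε)
        = ∑ _F ∈ bad, Real.exp (lam * ε) := by
          rw [Finset.sum_const, nsmul_eq_mul]
      _ ≤ ∑ F ∈ bad, Real.exp (lam * ∑ x, tt p f g T x F) := by
          apply Finset.sum_le_sum
          intro F hF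
          have := (Finset.mem_filter.1 hF).2
          exact Real.exp_le_exp.2 (mul_le_mul_of_nonneg_left this.le hlampos.le)
      _ ≤ A := by
          rw [hA]
          apply Finset.sum_le_sum_of_subset_of_nonneg (Finset.subset_univ _)
          intro F _ _
          exact (Real.exp_pos _).le
  -- final exponent arithmetic
  have hexp : 3 * lam^2 * S - lam * ε ≤ -(ε ^ 3 * (2:ℝ) ^ (k - 6)) := by
    have h26 : (2:ℝ) ^ (k - 6) = R / 64 := by
      rw [hR, Real.rpow_sub (by norm_num : (0:ℝ) < 2)]
      congr 1
      rw [show (6:ℝ) = ((6:ℕ):ℝ) by norm_num, Real.rpow_natCast]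
      norm_num
    have h1 : 3 * lam^2 * S ≤ 3 * lam^2 * R⁻¹ := by
      apply mul_le_mul_of_nonneg_left hSle (by positivity)
    have h2 : 3 * lam^2 * R⁻¹ = (3/64) * ε^2 * R := by
      rw [hlam]
      field_simp
      ring
    have h3 : lam * ε = (1/8) * ε^2 * R := by rw [hlam]; ring
    rw [h26]
    have h4 : ε^3 ≤ ε^2 := by nlinarith
    nlinarith [hRpos, sq_nonneg ε]
  calc (bad.card : ℝ)
      ≤ A / Real.exp (lam * ε) := by
        rw [le_div_iff₀ (Real.exp_pos _)]
        exact hcount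
    _ ≤ (cΩ * Real.exp (3 * lam^2 * S)) / Real.exp (lam * ε) := by
        exact (div_le_div_iff_of_pos_right (Real.exp_pos _)).2 hAle
    _ = cΩ * Real.exp (3 * lam^2 * S - lam * ε) := by
        rw [Real.exp_sub]
        ring
    _ ≤ cΩ * Real.exp (-(ε ^ 3 * (2:ℝ) ^ (k - 6))) := by
        apply mul_le_mul_of_nonneg_left (Real.exp_le_exp.2 hexp) hcΩ0.le
end PerTest2

section Final
variable {n m d : ℕ}
variable (p : (Fin n → Bool) → ℝ) (f : (Fin n → Bool) → (Fin n → Bool))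
  (g : (Fin n → Bool) → (Fin d → Bool))

lemma DD1_nonneg (hp0 : ∀ x, 0 ≤ p x) (F : (Fin n → Bool) → (Fin m → Bool)) (cab) :
    0 ≤ DD1 p f g F cab := by
  unfold DD1
  apply Finset.sum_nonneg
  intro x _
  split
  · exact hp0 x
  · exact le_refl 0

lemma DD2_nonneg (hp0 : ∀ x, 0 ≤ p x) (F : (Fin n → Bool) → (Fin m → Bool)) (cab) :
    0 ≤ DD2 p f g F cab := by
  unfold DD2
  apply Finset.sum_nonneg
  intro x _
  have h2m : (0:ℝ) ≤ 1 / 2^m := by positivity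
  split
  · apply mul_nonneg (mul_nonneg (hp0 x) h2m)
    split
    · split <;> norm_num
    · split <;> norm_num
  · exact le_refl 0

lemma DD1_total (hp1 : ∑ x, p x = 1) (F : (Fin n → Bool) → (Fin m → Bool)) :
    ∑ cab, DD1 p f g F cab = 1 := by
  unfold DD1
  rw [Finset.sum_comm]
  rw [← hp1]
  apply Finset.sum_congr rfl
  intro x _
  have h : ∑ cab : (Fin d → Bool) × (Fin m → Bool) × (Fin m → Bool),
      (if g x = cab.1 ∧ F x = cab.2.1 ∧ F (f x) = cab.2.2 then p x else 0)
      = (if ((g x, F x, F (f x)) : (Fin d → Bool) × (Fin m → Bool) × (Fin m → Bool))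
          ∈ Finset.univ then p x else 0) := by
    rw [← Finset.sum_ite_eq Finset.univ
      ((g x, F x, F (f x)) : (Fin d → Bool) × (Fin m → Bool) × (Fin m → Bool)) (fun _ => p x)]
    apply Finset.sum_congr rfl
    intro cab _
    obtain ⟨c, a, b⟩ := cab
    exact if_congr (by simp [Prod.mk.injEq]) rfl rfl
  rw [h, if_pos (Finset.mem_univ _)]

lemma tt_univ (x : Fin n → Bool) (F : (Fin n → Bool) → (Fin m → Bool)) :
    tt p f g Finset.univ x F = 0 := by
  unfold tt
  have h1 : ((Finset.univ.filter
      (fun a : Fin m → Bool => ((g x, a, if f x = x then a else F (f x)) :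
        (Fin d → Bool) × (Fin m → Bool) × (Fin m → Bool)) ∈ Finset.univ)).card : ℝ)
      = (2:ℝ)^m := by
    have : (Finset.univ.filter
        (fun a : Fin m → Bool => ((g x, a, if f x = x then a else F (f x)) :
          (Fin d → Bool) × (Fin m → Bool) × (Fin m → Bool)) ∈ Finset.univ))
        = (Finset.univ : Finset (Fin m → Bool)) := by
      apply Finset.filter_true_of_mem
      intro a _
      exact Finset.mem_univ _
    rw [this, Finset.card_univ]
    simp [Fintype.card_fun]
  rw [h1, if_pos (Finset.mem_univ _)]
  have h2m : ((2:ℝ)^m) ≠ 0 := by positivity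
  field_simp
  ring

lemma DD2_total (hp1 : ∑ x, p x = 1) (F : (Fin n → Bool) → (Fin m → Bool)) :
    ∑ cab, DD2 p f g F cab = 1 := by
  have h := L1 p f g Finset.univ F
  have h0 : ∑ x, tt p f g Finset.univ x F = 0 := by
    apply Finset.sum_eq_zero
    intro x _
    exact tt_univ p f g x F
  rw [h0, Finset.sum_sub_distrib] at h
  rw [DD1_total p f g hp1 F] at h
  linarith

lemma sd_le_one (hp0 : ∀ x, 0 ≤ p x) (hp1 : ∑ x, p x = 1)
    (F : (Fin n → Bool) → (Fin m → Bool)) :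
    sd (DD1 p f g F) (DD2 p f g F) ≤ 1 := by
  unfold sd
  have h : ∑ cab, |DD1 p f g F cab - DD2 p f g F cab|
      ≤ ∑ cab, (DD1 p f g F cab + DD2 p f g F cab) := by
    apply Finset.sum_le_sum
    intro cab _
    have h1 := DD1_nonneg p f g hp0 F cab
    have h2 := DD2_nonneg p f g hp0 F cab
    rw [abs_le]
    constructor <;> linarith
  rw [Finset.sum_add_distrib, DD1_total p f g hp1 F, DD2_total p f g hp1 F] at h
  linarith

lemma sd_pos_part (hp1 : ∑ x, p x = 1) (F : (Fin n → Bool) → (Fin m → Bool)) :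
    sd (DD1 p f g F) (DD2 p f g F)
      = ∑ cab ∈ Finset.univ.filter
          (fun cab => 0 < DD1 p f g F cab - DD2 p f g F cab),
          (DD1 p f g F cab - DD2 p f g F cab) := by
  classical
  unfold sd
  have htot : ∑ cab, (DD1 p f g F cab - DD2 p f g F cab) = 0 := by
    rw [Finset.sum_sub_distrib, DD1_total p f g hp1 F, DD2_total p f g hp1 F]
    ring
  set u : (Fin d → Bool) × (Fin m → Bool) × (Fin m → Bool) → ℝ :=
    fun cab => DD1 p f g F cab - DD2 p f g F cab with hu
  have hsplit := Finset.sum_filter_add_sum_filter_not Finset.univ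
    (fun cab => 0 < u cab) u
  have habs : ∑ cab, |u cab|
      = (∑ cab ∈ Finset.univ.filter (fun cab => 0 < u cab), u cab)
        - ∑ cab ∈ Finset.univ.filter (fun cab => ¬ 0 < u cab), u cab := by
    rw [← Finset.sum_filter_add_sum_filter_not Finset.univ (fun cab => 0 < u cab)
      (fun cab => |u cab|)]
    congr 1
    · apply Finset.sum_congr rfl
      intro cab hcab
      exact abs_of_pos (Finset.mem_filter.1 hcab).2
    · rw [← Finset.sum_neg_distrib]
      apply Finset.sum_congr rfl
      intro cab hcab
      exact abs_of_nonpos (not_lt.1 (Finset.mem_filter.1 hcab).2)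
  have htot' : (∑ cab ∈ Finset.univ.filter (fun cab => 0 < u cab), u cab)
      + ∑ cab ∈ Finset.univ.filter (fun cab => ¬ 0 < u cab), u cab = 0 := by
    rw [hsplit]; exact htot
  rw [habs]
  linarith
end Final

/-- let `X` be a distribution on `{0,1}^n` with min-entropy at least `k`,
`f : {0,1}^n → {0,1}^n` and `g : {0,1}^n → {0,1}^d` arbitrary.  For a uniformly random
function `NMExt : {0,1}^n → {0,1}^m`, with probability at least
`1 - 8·exp(2^{2m+d} - ε³·2^{k-6})`, the joint distribution
`(g(X), NMExt(X), NMExt(f(X)))` is `ε`-close to `(g(X), U, copy(Y, U))`, where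
`Y = same` if `f(X) = X` and `Y = NMExt(f(X))` otherwise, and `U` is an independent
uniform `m`-bit string. -/
theorem stmt_11 (n m d : ℕ) (k ε : ℝ) (hε : 0 < ε)
    (p : (Fin n → Bool) → ℝ) (hp0 : ∀ x, 0 ≤ p x) (hp1 : ∑ x, p x = 1)
    (hk : ∀ x, p x ≤ (2 : ℝ) ^ (-k))
    (f : (Fin n → Bool) → (Fin n → Bool)) (g : (Fin n → Bool) → (Fin d → Bool)) :
    1 - 8 * Real.exp ((2 : ℝ) ^ (2 * m + d) - ε ^ 3 * (2 : ℝ) ^ (k - 6)) ≤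
      ((univ.filter (fun F : (Fin n → Bool) → (Fin m → Bool) =>
          sd (fun cab : (Fin d → Bool) × (Fin m → Bool) × (Fin m → Bool) =>
                ∑ x, if g x = cab.1 ∧ F x = cab.2.1 ∧ F (f x) = cab.2.2
                  then p x else 0)
             (fun cab =>
                ∑ x, if g x = cab.1 then
                  p x * (1 / 2 ^ m) *
                    (if f x = x then (if cab.2.2 = cab.2.1 then 1 else 0)
                      else (if F (f x) = cab.2.2 then 1 else 0))
                  else 0) ≤ ε)).card : ℝ) /
        (Fintype.card ((Fin n → Bool) → (Fin m → Bool)) : ℝ) := by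
  classical
  have hcΩ : (0:ℝ) < (Fintype.card ((Fin n → Bool) → (Fin m → Bool)) : ℝ) := cardΩ_pos
  show 1 - 8 * Real.exp ((2 : ℝ) ^ (2 * m + d) - ε ^ 3 * (2 : ℝ) ^ (k - 6)) ≤
      ((univ.filter (fun F : (Fin n → Bool) → (Fin m → Bool) =>
          sd (DD1 p f g F) (DD2 p f g F) ≤ ε)).card : ℝ) /
        (Fintype.card ((Fin n → Bool) → (Fin m → Bool)) : ℝ)
  by_cases hε1 : ε ≤ 1
  · -- main case
    set good := univ.filter (fun F : (Fin n → Bool) → (Fin m → Bool) =>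
        sd (DD1 p f g F) (DD2 p f g F) ≤ ε) with hgood
    set Bad := univ.filter (fun F : (Fin n → Bool) → (Fin m → Bool) =>
        ¬ (sd (DD1 p f g F) (DD2 p f g F) ≤ ε)) with hBad
    have hcards : good.card + Bad.card = Fintype.card ((Fin n → Bool) → (Fin m → Bool)) := by
      rw [hgood, hBad, Finset.card_filter_add_card_filter_not, Finset.card_univ]
    -- Bad is covered by the per-test bad sets
    have hsubset : Bad ⊆ (univ : Finset (Finset ((Fin d → Bool) × (Fin m → Bool) × (Fin m → Bool)))).biUnion
        (fun T => univ.filter (fun F : (Fin n → Bool) → (Fin m → Bool) =>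
          ε < ∑ x, tt p f g T x F)) := by
      intro F hF
      have hsd : ε < sd (DD1 p f g F) (DD2 p f g F) :=
        not_le.1 (Finset.mem_filter.1 hF).2
      set Tstar := univ.filter
        (fun cab : (Fin d → Bool) × (Fin m → Bool) × (Fin m → Bool) =>
          0 < DD1 p f g F cab - DD2 p f g F cab) with hTstar
      have hval : ε < ∑ x, tt p f g Tstar x F := by
        rw [← L1 p f g Tstar F]
        calc ε < sd (DD1 p f g F) (DD2 p f g F) := hsd
          _ = ∑ cab ∈ Tstar, (DD1 p f g F cab - DD2 p f g F cab) :=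
              sd_pos_part p f g hp1 F
      exact Finset.mem_biUnion.2 ⟨Tstar, Finset.mem_univ _,
        Finset.mem_filter.2 ⟨Finset.mem_univ F, hval⟩⟩
    -- cardinality bound
    have hγ : Fintype.card ((Fin d → Bool) × (Fin m → Bool) × (Fin m → Bool))
        = 2 ^ (2 * m + d) := by
      simp only [Fintype.card_prod, Fintype.card_fun, Fintype.card_bool, Fintype.card_fin]
      ring
    have hBadcard : (Bad.card : ℝ)
        ≤ (Fintype.card (Finset ((Fin d → Bool) × (Fin m → Bool) × (Fin m → Bool))) : ℝ)
          * ((Fintype.card ((Fin n → Bool) → (Fin m → Bool)) : ℝ)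
            * Real.exp (-(ε ^ 3 * (2:ℝ) ^ (k - 6)))) := by
      have h1 : Bad.card ≤ ∑ T : Finset ((Fin d → Bool) × (Fin m → Bool) × (Fin m → Bool)),
          (univ.filter (fun F : (Fin n → Bool) → (Fin m → Bool) =>
            ε < ∑ x, tt p f g T x F)).card := by
        calc Bad.card ≤ _ := Finset.card_le_card hsubset
          _ ≤ _ := Finset.card_biUnion_le
      calc (Bad.card : ℝ)
          ≤ ∑ T : Finset ((Fin d → Bool) × (Fin m → Bool) × (Fin m → Bool)),
            ((univ.filter (fun F : (Fin n → Bool) → (Fin m → Bool) =>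
              ε < ∑ x, tt p f g T x F)).card : ℝ) := by
            exact_mod_cast h1
        _ ≤ ∑ _T : Finset ((Fin d → Bool) × (Fin m → Bool) × (Fin m → Bool)),
            ((Fintype.card ((Fin n → Bool) → (Fin m → Bool)) : ℝ)
              * Real.exp (-(ε ^ 3 * (2:ℝ) ^ (k - 6)))) := by
            apply Finset.sum_le_sum
            intro T _
            exact per_test p f g k ε hp0 hp1 hk hε hε1 T
        _ = _ := by
            rw [Finset.sum_const, Finset.card_univ, nsmul_eq_mul]
    -- the count of tests
    have hcount : (Fintype.card (Finset ((Fin d → Bool) × (Fin m → Bool) × (Fin m → Bool))) : ℝ)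
        ≤ Real.exp ((2:ℝ) ^ (2 * m + d)) := by
      rw [Fintype.card_finset, hγ]
      push_cast
      set M : ℕ := 2 ^ (2 * m + d) with hM
      calc (2:ℝ) ^ M ≤ (Real.exp 1) ^ M := by
            apply pow_le_pow_left₀ (by norm_num)
            have := Real.add_one_le_exp 1
            linarith
        _ = Real.exp (M : ℝ) := by
            rw [← Real.exp_nat_mul, mul_one]
        _ = Real.exp ((2:ℝ) ^ (2 * m + d)) := by
            congr 1
            rw [hM]
            push_cast
            ring
    have hBadfinal : (Bad.card : ℝ)
        ≤ 8 * Real.exp ((2:ℝ) ^ (2 * m + d) - ε ^ 3 * (2:ℝ) ^ (k - 6))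
          * (Fintype.card ((Fin n → Bool) → (Fin m → Bool)) : ℝ) := by
      calc (Bad.card : ℝ)
          ≤ (Fintype.card (Finset ((Fin d → Bool) × (Fin m → Bool) × (Fin m → Bool))) : ℝ)
            * ((Fintype.card ((Fin n → Bool) → (Fin m → Bool)) : ℝ)
              * Real.exp (-(ε ^ 3 * (2:ℝ) ^ (k - 6)))) := hBadcard
        _ ≤ Real.exp ((2:ℝ) ^ (2 * m + d))
            * ((Fintype.card ((Fin n → Bool) → (Fin m → Bool)) : ℝ)
              * Real.exp (-(ε ^ 3 * (2:ℝ) ^ (k - 6)))) := by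
            apply mul_le_mul_of_nonneg_right hcount (by positivity)
        _ = Real.exp ((2:ℝ) ^ (2 * m + d) - ε ^ 3 * (2:ℝ) ^ (k - 6))
            * (Fintype.card ((Fin n → Bool) → (Fin m → Bool)) : ℝ) := by
            have h := Real.exp_add ((2:ℝ) ^ (2 * m + d)) (-(ε ^ 3 * (2:ℝ) ^ (k - 6)))
            rw [← sub_eq_add_neg] at h
            rw [h]
            ring
        _ ≤ _ := by
            nlinarith [Real.exp_pos ((2:ℝ) ^ (2 * m + d) - ε ^ 3 * (2:ℝ) ^ (k - 6)), hcΩ]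
    -- conclude
    have hgc : (good.card : ℝ)
        = (Fintype.card ((Fin n → Bool) → (Fin m → Bool)) : ℝ) - (Bad.card : ℝ) := by
      have := hcards
      push_cast [← this]
      ring
    have hb : (Bad.card : ℝ) / (Fintype.card ((Fin n → Bool) → (Fin m → Bool)) : ℝ)
        ≤ 8 * Real.exp ((2:ℝ) ^ (2 * m + d) - ε ^ 3 * (2:ℝ) ^ (k - 6)) := by
      rw [div_le_iff₀ hcΩ]
      exact hBadfinal
    rw [hgc, sub_div, div_self (ne_of_gt hcΩ)]
    linarith
  · -- trivial case ε > 1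
    have hall : univ.filter (fun F : (Fin n → Bool) → (Fin m → Bool) =>
        sd (DD1 p f g F) (DD2 p f g F) ≤ ε) = univ := by
      apply Finset.filter_true_of_mem
      intro F _
      calc sd (DD1 p f g F) (DD2 p f g F) ≤ 1 := sd_le_one p f g hp0 hp1 F
        _ ≤ ε := (not_le.1 hε1).le
    rw [hall, Finset.card_univ, div_self (ne_of_gt hcΩ)]
    have := Real.exp_pos ((2 : ℝ) ^ (2 * m + d) - ε ^ 3 * (2 : ℝ) ^ (k - 6))
    linarith
end

section
/- Let G be a k×n matrix over a finite field F_q (q a power of 2) such that the rows of G span a linear code of relative distance at least δ, and the first k₀ rows of G span a linear code whose dual code has relative distance at least τ. Define Enc(s) for s ∈ F_q^{k-k₀} by choosing uniformly random (s₁,...,s_{k₀}) ∈ F_q^{k₀} and outputting (s₁,...,s_{k₀}, s)·G ∈ F_q^n, and Dec(w) to be the unique message part if w is in the row span of G, else ⊥. Then (Enc,Dec) is a (δn, τn)-linear error-correcting secret sharing scheme over F_q: it has minimum distance at least δn, for every fixed message s the codeword Enc(s) is (τn)-wise independent with uniform symbols, and Dec is additive on codewords. -/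
open scoped Classical
open Finset

-- helper: toDual on Pi.basisFun is the bilinear pairing
lemma piToDual_apply (F : Type*) [Field F] {ι : Type*} [Fintype ι] [DecidableEq ι]
    (a x : ι → F) : (Pi.basisFun F ι).toDual a x = ∑ i, a i * x i := by
  conv_lhs => rw [← (Pi.basisFun F ι).sum_repr a]
  rw [map_sum, LinearMap.sum_apply]
  refine Finset.sum_congr rfl fun i _ => ?_
  rw [map_smul, LinearMap.smul_apply, Module.Basis.toDual_apply_right, Pi.basisFun_repr,
    Pi.basisFun_repr, smul_eq_mul]

/-- LECSS from a linear code, Construction/Lemma on LECSS: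
let `G` be a full-row-rank `(k₀ + k₁) × n` matrix over a finite field `F` of
characteristic-2 size (rows indexed by `Fin k₀ ⊕ Fin k₁`, the first `k₀` rows indexed by
`Sum.inl`), such that the row span of `G` has relative distance at least `δ` and every
set of at most `τn` columns of the first `k₀` rows is linearly independent (dual relative
distance ≥ τ).  Encoding of message `s` with randomness `ρ` is `(Sum.elim ρ s) · G`;
`Dec` returns the message part of the unique preimage on codewords and `⊥ = none`
otherwise.  Then the scheme is a `(δn, τn)`-LECSS:
(1) any two distinct codewords differ in ≥ δn positions;
(2) for every message, the codeword restricted to any ≤ τn coordinates is uniform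
    (counted: each value has exactly `q^{k₀ - t}` preimages among random strings);
(3) `Dec` is additive on codewords. -/
theorem stmt_13 (F : Type*) [Field F] [Fintype F] [DecidableEq F]
    (hq : ∃ e : ℕ, Fintype.card F = 2 ^ e)
    (n k₀ k₁ : ℕ) (G : Matrix (Fin k₀ ⊕ Fin k₁) (Fin n) F)
    (hrank : LinearIndependent F (fun i => G i))
    (δ τ : ℝ)
    (hdist : ∀ u : Fin k₀ ⊕ Fin k₁ → F, u ≠ 0 →
      δ * n ≤ ((univ.filter (fun j => Matrix.vecMul u G j ≠ 0)).card : ℝ))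
    (hdual : ∀ T : Finset (Fin n), (T.card : ℝ) ≤ τ * n →
      LinearIndependent F (fun j : {j // j ∈ T} => fun i : Fin k₀ => G (Sum.inl i) j.1))
    (Dec : (Fin n → F) → Option (Fin k₁ → F))
    (hDec1 : ∀ u : Fin k₀ ⊕ Fin k₁ → F, Dec (Matrix.vecMul u G) = some (u ∘ Sum.inr))
    (hDec2 : ∀ w : Fin n → F, (¬ ∃ u, w = Matrix.vecMul u G) → Dec w = none) :
    (∀ u v : Fin k₀ ⊕ Fin k₁ → F, u ≠ v →
      δ * n ≤ ((univ.filter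
        (fun j => Matrix.vecMul u G j ≠ Matrix.vecMul v G j)).card : ℝ))
    ∧ (∀ s : Fin k₁ → F, ∀ T : Finset (Fin n), (T.card : ℝ) ≤ τ * n →
        ∀ w : Fin n → F,
        (univ.filter (fun ρ : Fin k₀ → F =>
            ∀ j ∈ T, Matrix.vecMul (Sum.elim ρ s) G j = w j)).card *
          Fintype.card F ^ T.card = Fintype.card F ^ k₀)
    ∧ (∀ w w' : Fin n → F, ∀ mu mv : Fin k₁ → F,
        Dec w = some mu → Dec w' = some mv → Dec (w + w') = some (mu + mv)) := by
  refine ⟨?_, ?_, ?_⟩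
  · -- distance
    intro u v huv
    have h := hdist (u - v) (sub_ne_zero.mpr huv)
    have heq : (univ.filter (fun j => Matrix.vecMul u G j ≠ Matrix.vecMul v G j))
        = (univ.filter (fun j => Matrix.vecMul (u - v) G j ≠ 0)) := by
      apply Finset.filter_congr
      intro j _
      rw [Matrix.sub_vecMul]
      simp [sub_ne_zero]
    rw [heq]; exact h
  · -- secrecy
    intro s T hTcard w
    have hLI := hdual T hTcard
    set M : Matrix (Fin k₀) {j // j ∈ T} F := fun i j => G (Sum.inl i) j.1 with hM
    set L : (Fin k₀ → F) →ₗ[F] ({j // j ∈ T} → F) := M.vecMulLinear with hLdef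
    have hLapp : ∀ (ρ : Fin k₀ → F) (j : {j // j ∈ T}),
        L ρ j = ∑ i, ρ i * G (Sum.inl i) j.1 := by
      intro ρ j
      rw [hLdef, Matrix.vecMulLinear_apply]; simp [hM, Matrix.vecMul, dotProduct]
    -- the transpose map is injective
    set Φ : ({j // j ∈ T} → F) →ₗ[F] (Fin k₀ → F) := M.transpose.vecMulLinear with hΦdef
    have hΦapp : ∀ (c : {j // j ∈ T} → F) (i : Fin k₀),
        Φ c i = ∑ j, c j * G (Sum.inl i) j.1 := by
      intro c i
      simp [hΦdef, hM, Matrix.vecMul, Matrix.mulVec, dotProduct, mul_comm]; rfl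
    have hΦ : Function.Injective Φ := by
      rw [← LinearMap.ker_eq_bot, LinearMap.ker_eq_bot']
      intro c hc
      rw [Fintype.linearIndependent_iff] at hLI
      funext j
      refine hLI c ?_ j
      funext i
      have := congrFun hc i
      rw [hΦapp] at this
      simpa using this
    -- hence L is surjective
    have hsurj : Function.Surjective L := by
      have hdsurj := LinearMap.dualMap_surjective_of_injective hΦ
      intro y
      obtain ⟨ψ, hψ⟩ := hdsurj ((Pi.basisFun F {j // j ∈ T}).toDual y)
      refine ⟨(Pi.basisFun F (Fin k₀)).toDualEquiv.symm ψ, ?_⟩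
      set ρ := (Pi.basisFun F (Fin k₀)).toDualEquiv.symm ψ with hρdef
      have hψρ : ψ = (Pi.basisFun F (Fin k₀)).toDual ρ := by
        rw [hρdef, ← Module.Basis.toDualEquiv_apply, LinearEquiv.apply_symm_apply]
      funext j
      have h1 := congrFun (congrArg DFunLike.coe hψ) (Pi.single j 1)
      rw [LinearMap.dualMap_apply, hψρ, piToDual_apply, piToDual_apply] at h1
      have hΦsingle : Φ (Pi.single j (1:F)) = fun i => G (Sum.inl i) j.1 := by
        funext i
        rw [hΦapp]
        simp [Pi.single_apply, ite_mul]
      rw [hΦsingle] at h1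
      rw [hLapp]
      simpa [Pi.single_apply, mul_ite] using h1
    -- set up the target vector
    set c : {j // j ∈ T} → F :=
      fun j => w j.1 - Matrix.vecMul (Sum.elim (0 : Fin k₀ → F) s) G j.1 with hc
    have hsplit : ∀ (ρ : Fin k₀ → F) (j : {j // j ∈ T}),
        Matrix.vecMul (Sum.elim ρ s) G j.1
          = L ρ j + Matrix.vecMul (Sum.elim (0 : Fin k₀ → F) s) G j.1 := by
      intro ρ j
      rw [hLapp]
      simp [Matrix.vecMul, dotProduct, Fintype.sum_sum_type]
    have hcond : ∀ ρ : Fin k₀ → F,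
        (∀ j ∈ T, Matrix.vecMul (Sum.elim ρ s) G j = w j) ↔ L ρ = c := by
      intro ρ
      constructor
      · intro h
        funext j
        have h2 := h j.1 j.2
        rw [hsplit ρ j] at h2
        rw [hc]
        exact eq_sub_of_add_eq h2
      · intro h j hj
        have h2 := congrFun h ⟨j, hj⟩
        rw [hc] at h2
        rw [hsplit ρ ⟨j, hj⟩, h2]
        ring
    obtain ⟨ρ₀, hρ₀⟩ := hsurj c
    have hbij : (univ.filter (fun ρ : Fin k₀ → F =>
          ∀ j ∈ T, Matrix.vecMul (Sum.elim ρ s) G j = w j)).card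
        = (univ.filter (fun ρ : Fin k₀ → F => L ρ = 0)).card := by
      apply Finset.card_bij (fun ρ _ => ρ - ρ₀)
      · intro ρ hρ
        simp only [mem_filter, mem_univ, true_and] at *
        rw [map_sub, (hcond ρ).1 hρ, hρ₀, sub_self]
      · intro a _ b _ h
        exact by simpa using congrArg (· + ρ₀) h
      · intro ρ hρ
        simp only [mem_filter, mem_univ, true_and] at hρ
        refine ⟨ρ + ρ₀, ?_, by abel⟩
        simp only [mem_filter, mem_univ, true_and]
        exact (hcond _).2 (by rw [map_add, hρ, zero_add, hρ₀])
    have hker : (univ.filter (fun ρ : Fin k₀ → F => L ρ = 0)).card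
        = Nat.card (LinearMap.ker L) := by
      rw [Nat.card_eq_fintype_card, Fintype.card_subtype]
      congr 1
      apply Finset.filter_congr
      intro ρ _
      simp [LinearMap.mem_ker]
    have hrange : Nat.card ((Fin k₀ → F) ⧸ LinearMap.ker L)
        = Fintype.card F ^ T.card := by
      have e1 := (LinearMap.quotKerEquivRange L)
      have e2 : (LinearMap.range L : Submodule F ({j // j ∈ T} → F)) = ⊤ :=
        LinearMap.range_eq_top.mpr hsurj
      rw [Nat.card_congr e1.toEquiv, e2]
      rw [Nat.card_congr (Submodule.topEquiv).toEquiv]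
      rw [Nat.card_eq_fintype_card, Fintype.card_fun, Fintype.card_coe]
    have htotal := Submodule.card_eq_card_quotient_mul_card (LinearMap.ker L)
    rw [Nat.card_eq_fintype_card, Fintype.card_fun, Fintype.card_fin] at htotal
    rw [hbij, hker, htotal, hrange, mul_comm]
  · -- additivity
    intro w w' mu mv hw hw'
    obtain ⟨u, rfl⟩ : ∃ u, w = Matrix.vecMul u G := by
      by_contra h; rw [hDec2 w h] at hw; exact Option.noConfusion rfl (heq_of_eq hw)
    obtain ⟨v, rfl⟩ : ∃ v, w' = Matrix.vecMul v G := by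
      by_contra h; rw [hDec2 w' h] at hw'; exact Option.noConfusion rfl (heq_of_eq hw')
    rw [hDec1] at hw hw'
    rw [← Matrix.add_vecMul, hDec1]
    injection hw with hw
    injection hw' with hw'
    subst hw; subst hw'
    rfl
end
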